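/- arXiv:math/0208066 — 13 statements merged into one kernel-verified Lean document; each statement's English description precedes it below -/
import Mathlib

section
/- If A ⊆ X^k meets each s-parallelism equivalence class in at most one element and g : A → X is any function, then there exists f ∈ Pol(s) with f↾A = g; if A meets each class in exactly one element, this extension f ∈ Pol(s) is unique. -/
/-- An `n`-indexed operation has arity `n+1` (arities are positive). -/
abbrev Op (X : Type*) (n : ℕ) := (Fin (n + 1) → X) → X

/-- A clone: contains all projections and is closed under composition. -/
def IsClone {X : Type*} (C : ∀ n, Set (Op X n)) : Prop :=
  (∀ (n : ℕ) (i : Fin (n + 1)), (fun x => x i) ∈ C n) ∧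
  (∀ (m n : ℕ) (f : Op X m) (g : Fin (m + 1) → Op X n),
    f ∈ C m → (∀ i, g i ∈ C n) → (fun x => f (fun i => g i x)) ∈ C n)

/-- A local clone: a clone closed under interpolation on finite sets. -/
def IsLocalClone {X : Type*} (C : ∀ n, Set (Op X n)) : Prop :=
  IsClone C ∧
  ∀ (n : ℕ) (f : Op X n),
    (∀ A : Finset (Fin (n + 1) → X), ∃ g ∈ C n, ∀ a ∈ A, g a = f a) → f ∈ C n

/-- `Pol σ`: the operations commuting with the permutation `σ` acting coordinatewise. -/
def Pol {X : Type*} (σ : Equiv.Perm X) : ∀ n, Set (Op X n) :=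
  fun n => {f | ∀ a : Fin (n + 1) → X, f (fun i => σ (a i)) = σ (f a)}

/-- `σ` has no cycles: no nonzero power has a fixed point. -/
def NoCycles {X : Type*} (σ : Equiv.Perm X) : Prop :=
  ∀ (x : X) (m : ℤ), (σ ^ m) x = x → m = 0

/-- Two tuples are `σ`-parallel if one is obtained from the other by a power of `σ`. -/
def Parallel {X : Type*} (σ : Equiv.Perm X) {k : ℕ} (a b : Fin k → X) : Prop :=
  ∃ m : ℤ, (fun i => (σ ^ m) (a i)) = b

section Aux
variable {X : Type*} (s : Equiv.Perm X) (k : ℕ)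

theorem shift1 (m : ℤ) (x : X) : (s ^ (m + 1)) x = s ((s ^ m) x) := by
  rw [show m + 1 = 1 + m by ring, zpow_add, zpow_one, Equiv.Perm.mul_apply]

theorem shiftm1 (m : ℤ) (x : X) : (s ^ (m - 1)) x = s.symm ((s ^ m) x) := by
  have := shift1 s (m - 1) x
  rw [sub_add_cancel] at this
  rw [this]; simp

theorem pol_zpow {f : Op X k} (hf : f ∈ Pol s k) (m : ℤ) (a : Fin (k+1) → X) :
    f (fun i => (s ^ m) (a i)) = (s ^ m) (f a) := by
  induction m using Int.induction_on with
  | zero => simp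
  | succ n ih =>
      simp only [shift1]
      rw [hf (fun i => (s ^ (n : ℤ)) (a i)), ih]
  | pred n ih =>
      have hrw : (-(n : ℤ) - 1) = (-(n : ℤ)) - 1 := by ring
      simp only [hrw, shiftm1]
      rw [← ih]
      have key := hf (fun i => s.symm ((s ^ (-(n : ℤ))) (a i)))
      simp only [Equiv.apply_symm_apply] at key
      rw [key]; simp

theorem myZpowInj (hs : NoCycles s) {x : X} {m m' : ℤ}
    (h : (s ^ m) x = (s ^ m') x) : m = m' := by
  have h2 : (s ^ (m - m')) x = x := by
    have := congrArg (⇑(s ^ (-m'))) h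
    rw [← Equiv.Perm.mul_apply, ← Equiv.Perm.mul_apply, ← zpow_add, ← zpow_add] at this
    simpa [neg_add_eq_sub] using this
  have := hs x (m - m') h2
  omega
end Aux

/-- If `A ⊆ X^(k+1)` meets each `s`-parallelism class in at most one
element, any `g : A → X` extends to some `f ∈ Pol s`; if `A` meets each class in
exactly one element, the extension in `Pol s` is unique. -/
theorem pol_extension {X : Type*} [Infinite X] (s : Equiv.Perm X)
    (hs : NoCycles s) (k : ℕ) (A : Set (Fin (k + 1) → X))
    (hA : ∀ a ∈ A, ∀ b ∈ A, Parallel s a b → a = b)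
    (g : (Fin (k + 1) → X) → X) :
    (∃ f ∈ Pol s k, ∀ a ∈ A, f a = g a) ∧
    ((∀ b : Fin (k + 1) → X, ∃ a ∈ A, Parallel s a b) →
      ∃! f : Op X k, f ∈ Pol s k ∧ ∀ a ∈ A, f a = g a) := by
  classical
  set Q : (Fin (k + 1) → X) → Prop :=
    fun b => ∃ p : (Fin (k + 1) → X) × ℤ, p.1 ∈ A ∧ (fun i => (s ^ p.2) (p.1 i)) = b with hQ
  set f : Op X k := fun b => if h : Q b then (s ^ h.choose.2) (g h.choose.1) else b 0 with hfdef
  have hwd : ∀ (b : Fin (k+1) → X) (h : Q b) (a : Fin (k+1) → X) (m : ℤ),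
      a ∈ A → (fun i => (s ^ m) (a i)) = b → h.choose = (a, m) := by
    intro b h a m ha hm
    obtain ⟨hc1, hc2⟩ := h.choose_spec
    have hpar : Parallel s a h.choose.1 := by
      refine ⟨m - h.choose.2, funext fun i => ?_⟩
      have e1 := congrFun hm i
      have e2 := congrFun hc2 i
      have key : (s ^ (m - h.choose.2)) (a i) = (s ^ (-h.choose.2)) ((s ^ m) (a i)) := by
        rw [← Equiv.Perm.mul_apply, ← zpow_add, neg_add_eq_sub]
      rw [key, e1, ← e2, ← Equiv.Perm.mul_apply, ← zpow_add]
      simp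
    have heq : a = h.choose.1 := hA a ha h.choose.1 hc1 hpar
    have hmeq : h.choose.2 = m := by
      apply myZpowInj s hs (x := a 0)
      have h1 := congrFun hc2 0
      have h2 := congrFun hm 0
      rw [← heq] at h1
      rw [h1, h2]
    ext <;> simp [← heq, hmeq]
  have hfa : ∀ a ∈ A, f a = g a := by
    intro a ha
    have hq : Q a := ⟨(a, 0), ha, by simp⟩
    have := hwd a hq a 0 ha (by simp)
    simp [hfdef, dif_pos hq, this]
  have hfpol : f ∈ Pol s k := by
    intro a
    by_cases hq : Q a
    · obtain ⟨p, hp1, hp2⟩ := hq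
      have hq : Q a := ⟨p, hp1, hp2⟩
      have hsa : (fun i => (s ^ (p.2 + 1)) (p.1 i)) = fun i => s (a i) := by
        funext i; rw [shift1, congrFun hp2 i]
      have hq' : Q (fun i => s (a i)) := ⟨(p.1, p.2 + 1), hp1, hsa⟩
      have h1 := hwd a hq p.1 p.2 hp1 hp2
      have h2 := hwd _ hq' p.1 (p.2 + 1) hp1 hsa
      simp only [hfdef, dif_pos hq', dif_pos hq, h1, h2]
      exact shift1 s p.2 (g p.1)
    · have hq' : ¬ Q (fun i => s (a i)) := by
        rintro ⟨p, hp1, hp2⟩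
        refine hq ⟨(p.1, p.2 - 1), hp1, funext fun i => ?_⟩
        have e := congrFun hp2 i
        rw [shiftm1, e]
        simp
      simp [hfdef, dif_neg hq, dif_neg hq']
  refine ⟨⟨f, hfpol, hfa⟩, fun htot => ⟨f, ⟨hfpol, hfa⟩, ?_⟩⟩
  rintro f' ⟨hf'pol, hf'a⟩
  funext b
  obtain ⟨a, ha, m, hm⟩ := htot b
  rw [← hm, pol_zpow s k hf'pol, pol_zpow s k hfpol, hf'a a ha, hfa a ha]
end

section
/- For any clone 𝒟 containing Pol(s), the set G_𝒟 = { n ∈ ℤ : every unary function of 𝒟 lies in Pol(s^n) } is a subgroup of ℤ. -/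
/-- For a clone `𝒟 ⊇ Pol s`, the set
`G_𝒟 = { m : ℤ | every unary member of 𝒟 lies in Pol (s ^ m) }` is a subgroup of `ℤ`. -/
theorem G_D_subgroup {X : Type*} [Infinite X] (s : Equiv.Perm X)
    (hs : NoCycles s) (D : ∀ n, Set (Op X n)) (hD : IsClone D)
    (hDs : ∀ n, Pol s n ⊆ D n) :
    ∃ G : AddSubgroup ℤ,
      (G : Set ℤ) = {m : ℤ | ∀ f ∈ D 0, f ∈ Pol (s ^ m) 0} := by
  refine ⟨{
    carrier := {m : ℤ | ∀ f ∈ D 0, f ∈ Pol (s ^ m) 0}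
    zero_mem' := by
      intro f _ a
      simp [Pol]
    add_mem' := by
      intro m n hm hn f hf a
      have h1 := hm f hf (fun i => (s ^ n) (a i))
      have h2 := hn f hf a
      simp only [zpow_add, Equiv.Perm.mul_apply]
      rw [h1, h2]
    neg_mem' := by
      intro m hm f hf a
      have h1 := hm f hf (fun i => (s ^ (-m)) (a i))
      simp only [← Equiv.Perm.mul_apply, ← zpow_add, add_neg_cancel,
        zpow_zero, Equiv.Perm.one_apply] at h1
      have := congrArg (s ^ (-m)) h1
      simp only [← Equiv.Perm.mul_apply, neg_add_cancel, ← zpow_add,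
        zpow_zero, Equiv.Perm.one_apply] at this
      exact this.symm }, rfl⟩
end

section
/- If 𝒟 is a clone with Pol(s) ⊆ 𝒟 and 𝒟 ≠ Pol(s), then already the unary parts differ: 𝒟^(1) ≠ Pol(s)^(1). -/
open Classical in
noncomputable def G {X : Type*} (σ : Equiv.Perm X) (x0 a y : X) : X :=
  if h : ∃ m : ℤ, (σ ^ m) x0 = y then (σ ^ h.choose) a else y

lemma pow_inj {X : Type*} (σ : Equiv.Perm X) (hs : NoCycles σ) (x0 : X)
    {m k : ℤ} (h : (σ ^ m) x0 = (σ ^ k) x0) : m = k := by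
  have h2 : (σ ^ (m - k)) ((σ ^ k) x0) = (σ ^ k) x0 := by
    rw [← Equiv.Perm.mul_apply, ← zpow_add]
    have e : m - k + k = m := by ring
    rw [e, h]
  have := hs ((σ ^ k) x0) (m - k) h2
  omega

lemma G_equiv {X : Type*} (σ : Equiv.Perm X) (hs : NoCycles σ) (x0 a y : X) :
    G σ x0 a (σ y) = σ (G σ x0 a y) := by
  classical
  unfold G
  by_cases h : ∃ m : ℤ, (σ ^ m) x0 = y
  · have h' : ∃ m : ℤ, (σ ^ m) x0 = σ y :=
      ⟨1 + h.choose, by rw [zpow_add, zpow_one, Equiv.Perm.mul_apply, h.choose_spec]⟩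
    rw [dif_pos h, dif_pos h']
    have he : h'.choose = 1 + h.choose := by
      apply pow_inj σ hs x0
      rw [h'.choose_spec, zpow_add, zpow_one, Equiv.Perm.mul_apply, h.choose_spec]
    rw [he, zpow_add, zpow_one, Equiv.Perm.mul_apply]
  · have h' : ¬ ∃ m : ℤ, (σ ^ m) x0 = σ y := by
      rintro ⟨m, hm⟩
      refine h ⟨m - 1, ?_⟩
      have e : m = 1 + (m - 1) := by ring
      rw [e, zpow_add, zpow_one, Equiv.Perm.mul_apply] at hm
      exact σ.injective hm
    rw [dif_neg h, dif_neg h']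

lemma G_base {X : Type*} (σ : Equiv.Perm X) (hs : NoCycles σ) (x0 a : X) :
    G σ x0 a x0 = a := by
  classical
  unfold G
  have h : ∃ m : ℤ, (σ ^ m) x0 = x0 := ⟨0, by simp⟩
  rw [dif_pos h]
  have : h.choose = 0 := hs x0 _ h.choose_spec
  simp [this]

/-- If a clone `𝒟` contains `Pol s` and differs from it,
then already the unary parts differ. -/
theorem unary_parts_differ {X : Type*} [Infinite X] (s : Equiv.Perm X)
    (hs : NoCycles s) (D : ∀ n, Set (Op X n)) (hD : IsClone D)
    (hDs : ∀ n, Pol s n ⊆ D n) (hne : D ≠ Pol s) :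
    D 0 ≠ Pol s 0 := by
  intro h0
  apply hne
  funext n
  apply Set.Subset.antisymm _ (hDs n)
  intro f hf a
  obtain ⟨x0⟩ : Nonempty X := inferInstance
  have hgPol : ∀ i, (fun v : Fin 1 → X => G s x0 (a i) (v 0)) ∈ Pol s 0 :=
    fun i v => G_equiv s hs x0 (a i) (v 0)
  have hcomp : (fun v : Fin 1 → X => f (fun i => G s x0 (a i) (v 0))) ∈ D 0 :=
    hD.2 n 0 f _ hf (fun i => hDs 0 (hgPol i))
  have key := (h0 ▸ hcomp) (fun _ => x0)
  simp only [G_equiv s hs, G_base s hs] at key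
  exact key
end

section
/- The map n ↦ Pol(s^n) is a lattice isomorphism from (ℕ, divisibility) (with 1 the least and 0 the greatest element) onto the interval [Pol(s), 𝒪] in the lattice of local clones on X. In particular, there is no precomplete local clone above Pol(s), so the lattice of local clones on an infinite set is not dually atomic. -/
namespace PolAux

variable {X : Type*} (s : Equiv.Perm X)

/-- commutation of `f` with `s ^ m`, `m : ℤ`. -/
def SComm {k : ℕ} (f : Op X k) (m : ℤ) : Prop :=
  ∀ a : Fin (k + 1) → X, f (fun i => (s ^ m) (a i)) = (s ^ m) (f a)

lemma zc (m n : ℤ) (x : X) : (s ^ (m + n)) x = (s ^ m) ((s ^ n) x) := by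
  rw [zpow_add]; rfl

lemma sComm_zero {k : ℕ} (f : Op X k) : SComm s f 0 := by
  intro a; simp

lemma sComm_add {k : ℕ} {f : Op X k} {m n : ℤ} (hm : SComm s f m) (hn : SComm s f n) :
    SComm s f (m + n) := by
  intro a
  have h1 : (fun i => (s ^ (m + n)) (a i)) = fun i => (s ^ m) ((s ^ n) (a i)) := by
    funext i; exact zc s m n (a i)
  rw [h1, hm (fun i => (s ^ n) (a i)), hn a, zc]

lemma sComm_neg {k : ℕ} {f : Op X k} {m : ℤ} (hm : SComm s f m) : SComm s f (-m) := by
  intro a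
  have h1 : (fun i => (s ^ m) ((s ^ (-m)) (a i))) = a := by
    funext i; rw [← zc]; simp
  have h2 := hm (fun i => (s ^ (-m)) (a i))
  rw [h1] at h2
  rw [h2, ← zc]; simp

def gsub {k : ℕ} (f : Op X k) : AddSubgroup ℤ where
  carrier := {m | SComm s f m}
  zero_mem' := sComm_zero s f
  add_mem' := fun h1 h2 => sComm_add s h1 h2
  neg_mem' := fun h => sComm_neg s h

lemma sComm_of_dvd {k : ℕ} {f : Op X k} {m t : ℤ} (h : SComm s f m) (hd : m ∣ t) :
    SComm s f t := by
  obtain ⟨c, rfl⟩ := hd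
  have h2 : m * c = c • m := by simp [mul_comm]
  have := AddSubgroup.zsmul_mem (gsub s f) h c
  rwa [← h2] at this

lemma mem_pol_iff {k n : ℕ} (f : Op X k) : f ∈ Pol (s ^ n) k ↔ SComm s f (n : ℤ) := by
  constructor <;> intro h a <;> simpa [zpow_natCast] using h a

lemma zpow_inj (hs : NoCycles s) {m n : ℤ} {x : X} (h : (s ^ m) x = (s ^ n) x) : m = n := by
  have h1 : (s ^ (m - n)) ((s ^ n) x) = (s ^ n) x := by
    rw [← zc, sub_add_cancel, h]
  have := hs _ _ h1
  omega

/-- Equivariant unary map with a prescribed value. -/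
lemma exists_equivariant (hs : NoCycles s) (x₀ y₀ : X) :
    ∃ u : X → X, (∀ (m : ℤ) (x : X), u ((s ^ m) x) = (s ^ m) (u x)) ∧ u x₀ = y₀ := by
  classical
  refine ⟨fun x => if h : ∃ t : ℤ, (s ^ t) x₀ = x then (s ^ h.choose) y₀ else x, ?_, ?_⟩
  · intro m x
    by_cases hx : ∃ t : ℤ, (s ^ t) x₀ = x
    · have hx' : ∃ t : ℤ, (s ^ t) x₀ = (s ^ m) x :=
        ⟨m + hx.choose, by rw [zc, hx.choose_spec]⟩
      beta_reduce
      rw [dif_pos hx, dif_pos hx']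
      have h1 : (s ^ hx'.choose) x₀ = (s ^ (m + hx.choose)) x₀ := by
        rw [hx'.choose_spec, zc, hx.choose_spec]
      have h2 := zpow_inj s hs h1
      rw [h2, zc]
    · have hx' : ¬ ∃ t : ℤ, (s ^ t) x₀ = (s ^ m) x := by
        rintro ⟨t, ht⟩
        exact hx ⟨t - m, by rw [sub_eq_neg_add, zc, ht, ← zc]; simp⟩
      beta_reduce
      rw [dif_neg hx, dif_neg hx']
  · have hx : ∃ t : ℤ, (s ^ t) x₀ = x₀ := ⟨0, by simp⟩
    beta_reduce
    rw [dif_pos hx]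
    have := zpow_inj s hs (x := x₀) (n := 0) (by simpa using hx.choose_spec)
    rw [this]; simp

/-- Equivariant interpolation on tuple space: prescribe values on a family of
tuples, provided the prescription is consistent along shifts. -/
lemma exists_pol_interpolant (hs : NoCycles s) {k : ℕ} {S : Type*}
    (T : S → (Fin (k + 1) → X)) (y : S → X)
    (hcon : ∀ (p q : S) (t : ℤ), (fun i => (s ^ t) (T p i)) = T q → (s ^ t) (y p) = y q) :
    ∃ Φ : Op X k, Φ ∈ Pol s k ∧ ∀ p, Φ (T p) = y p := by
  classical
  set Φ : Op X k := fun b =>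
    if h : ∃ pt : S × ℤ, (fun i => (s ^ pt.2) (T pt.1 i)) = b
    then (s ^ h.choose.2) (y h.choose.1) else b 0 with hΦ
  have hwd : ∀ (b : Fin (k + 1) → X) (p : S) (t : ℤ),
      (fun i => (s ^ t) (T p i)) = b → Φ b = (s ^ t) (y p) := by
    intro b p t hb
    have hex : ∃ pt : S × ℤ, (fun i => (s ^ pt.2) (T pt.1 i)) = b := ⟨(p, t), hb⟩
    rw [hΦ]; beta_reduce; rw [dif_pos hex]
    have hspec := hex.choose_spec
    set q := hex.choose.1
    set u := hex.choose.2
    have hTq : (fun i => (s ^ (t - u)) (T p i)) = T q := by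
      funext i
      have h1 : (s ^ u) (T q i) = (s ^ t) (T p i) :=
        (congrFun hspec i).trans (congrFun hb i).symm
      have : (s ^ (t - u)) (T p i) = (s ^ (-u)) ((s ^ t) (T p i)) := by
        rw [← zc]; ring_nf
      rw [this, ← h1, ← zc]; simp
    have := hcon p q (t - u) hTq
    rw [← this, ← zc]; ring_nf
  have hnone : ∀ (b : Fin (k + 1) → X),
      (¬ ∃ pt : S × ℤ, (fun i => (s ^ pt.2) (T pt.1 i)) = b) → Φ b = b 0 := by
    intro b hb; rw [hΦ]; beta_reduce; rw [dif_neg hb]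
  refine ⟨Φ, ?_, ?_⟩
  · intro b
    by_cases hb : ∃ pt : S × ℤ, (fun i => (s ^ pt.2) (T pt.1 i)) = b
    · obtain ⟨⟨p, t⟩, hpt⟩ := hb
      have h1 : (fun i => (s ^ (1 + t)) (T p i)) = fun i => s (b i) := by
        funext i; rw [zc, congrFun hpt i]; simp
      rw [hwd _ p (1 + t) h1, hwd _ p t hpt, zc]; simp
    · have hb' : ¬ ∃ pt : S × ℤ, (fun i => (s ^ pt.2) (T pt.1 i)) = fun i => s (b i) := by
        rintro ⟨⟨p, t⟩, hpt⟩
        refine hb ⟨⟨p, t - 1⟩, funext fun i => ?_⟩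
        have h1 : (s ^ t) (T p i) = s (b i) := congrFun hpt i
        have h2 : (s ^ (t - 1)) (T p i) = (s ^ (-1 : ℤ)) ((s ^ t) (T p i)) := by
          rw [← zc]; ring_nf
        rw [h2, h1]; simp
      rw [hnone _ hb', hnone _ hb]
  · intro p
    exact (hwd (T p) p 0 (by funext i; simp)).trans (by simp)

lemma pol_mono {m n : ℕ} (hmn : m ∣ n) (k : ℕ) : Pol (s ^ m) k ⊆ Pol (s ^ n) k := by
  intro f hf
  exact (mem_pol_iff s f).mpr
    (sComm_of_dvd s ((mem_pol_iff s f).mp hf) (Int.natCast_dvd_natCast.mpr hmn))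

lemma dvd_of_pol_subset [Nonempty X] (hs : NoCycles s) {m n : ℕ}
    (h : Pol (s ^ m) 0 ⊆ Pol (s ^ n) 0) : m ∣ n := by
  classical
  by_contra hmn
  obtain ⟨x₀⟩ := ‹Nonempty X›
  by_cases hm : m = 0
  · subst hm
    have hc : (fun _ : Fin 1 → X => x₀) ∈ Pol (s ^ 0) 0 := by
      intro a; simp
    have h2 := (mem_pol_iff s _).mp (h hc) (fun _ => x₀)
    have h3 : (s ^ (n : ℤ)) x₀ = (s ^ (0 : ℤ)) x₀ := by
      simpa using h2.symm
    have := zpow_inj s hs h3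
    exact hmn (by simp [show n = 0 by exact_mod_cast this])
  · set g : X → X := fun x =>
      if ∃ t : ℤ, (s ^ ((m : ℤ) * t + n)) x₀ = x then (s ^ (m : ℤ)) x else x with hg
    have hx₀ : ¬ ∃ t : ℤ, (s ^ ((m : ℤ) * t + n)) x₀ = x₀ := by
      rintro ⟨t, ht⟩
      have h1 : (s ^ ((m : ℤ) * t + n)) x₀ = (s ^ (0 : ℤ)) x₀ := by simpa using ht
      have h2 := zpow_inj s hs h1
      have : (m : ℤ) ∣ (n : ℤ) := ⟨-t, by linarith⟩
      exact hmn (Int.natCast_dvd_natCast.mp this)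
    have hmem : ∀ x : X, (∃ t : ℤ, (s ^ ((m : ℤ) * t + n)) x₀ = (s ^ (m : ℤ)) x) ↔
        (∃ t : ℤ, (s ^ ((m : ℤ) * t + n)) x₀ = x) := by
      intro x
      constructor
      · rintro ⟨t, ht⟩
        refine ⟨t - 1, ?_⟩
        have : ((m : ℤ) * (t - 1) + n) = -m + ((m : ℤ) * t + n) := by ring
        rw [this, zc, ht, ← zc]; simp
      · rintro ⟨t, ht⟩
        refine ⟨t + 1, ?_⟩
        have : ((m : ℤ) * (t + 1) + n) = m + ((m : ℤ) * t + n) := by ring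
        rw [this, zc, ht]
    have hfm : (fun a : Fin 1 → X => g (a 0)) ∈ Pol (s ^ m) 0 := by
      rw [mem_pol_iff]
      intro a
      show g ((s ^ (m : ℤ)) (a 0)) = (s ^ (m : ℤ)) (g (a 0))
      rw [hg]
      beta_reduce
      by_cases hx : ∃ t : ℤ, (s ^ ((m : ℤ) * t + n)) x₀ = a 0
      · rw [if_pos ((hmem (a 0)).mpr hx), if_pos hx]
      · rw [if_neg (fun hc => hx ((hmem (a 0)).mp hc)), if_neg hx]
    have hfn := (mem_pol_iff s _).mp (h hfm) (fun _ => x₀)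
    -- hfn : g ((s ^ (n:ℤ)) x₀) = (s ^ (n:ℤ)) (g x₀)
    have hO : ∃ t : ℤ, (s ^ ((m : ℤ) * t + n)) x₀ = (s ^ (n : ℤ)) x₀ := ⟨0, by norm_num⟩
    have hL : g ((s ^ (n : ℤ)) x₀) = (s ^ ((m : ℤ) + n)) x₀ := by
      rw [hg]; beta_reduce; rw [if_pos hO, ← zc]
    have hR : g x₀ = x₀ := by rw [hg]; beta_reduce; rw [if_neg hx₀]
    have hg0 : g ((s ^ (n : ℤ)) x₀) = (s ^ (n : ℤ)) (g x₀) := hfn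
    rw [hL, hR] at hg0
    have := zpow_inj s hs hg0
    omega

lemma isLocalClone_pol (σ : Equiv.Perm X) : IsLocalClone (Pol σ) := by
  classical
  refine ⟨⟨?_, ?_⟩, ?_⟩
  · intro n i a; rfl
  · intro m n f g hf hg a
    show f (fun i => g i (fun j => σ (a j))) = σ (f (fun i => g i a))
    have h1 : (fun i => g i (fun j => σ (a j))) = fun i => σ (g i a) := by
      funext i; exact hg i a
    rw [h1, hf (fun i => g i a)]
  · intro n f hf a
    obtain ⟨g, hg, hga⟩ := hf ({a, fun i => σ (a i)} : Finset (Fin (n + 1) → X))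
    rw [← hga _ (Finset.mem_insert_of_mem (Finset.mem_singleton_self _)),
      ← hga a (Finset.mem_insert_self _ _)]
    exact hg a

lemma pol_surj (hs : NoCycles s) (D : ∀ n, Set (Op X n)) (hD : IsLocalClone D)
    (hDs : ∀ k, Pol s k ⊆ D k) : ∃ n : ℕ, D = Pol (s ^ n) := by
  classical
  set H : AddSubgroup ℤ :=
    { carrier := {t | ∀ (k : ℕ) (f : Op X k), f ∈ D k → SComm s f t}
      zero_mem' := fun k f _ => sComm_zero s f
      add_mem' := fun h1 h2 k f hf => sComm_add s (h1 k f hf) (h2 k f hf)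
      neg_mem' := fun h1 k f hf => sComm_neg s (h1 k f hf) } with hH
  have memH : ∀ t : ℤ, t ∈ H ↔ ∀ (k : ℕ) (f : Op X k), f ∈ D k → SComm s f t :=
    fun t => Iff.rfl
  obtain ⟨aa, ha⟩ := Int.subgroup_cyclic H
  set n₀ : ℕ := aa.natAbs with hn₀
  have hdvd : ∀ t : ℤ, t ∈ H ↔ (n₀ : ℤ) ∣ t := by
    intro t
    rw [ha, AddSubgroup.mem_closure_singleton, hn₀, Int.natAbs_dvd]
    constructor
    · rintro ⟨c, rfl⟩; exact Dvd.intro_left c rfl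
    · rintro ⟨c, rfl⟩; exact ⟨c, by rw [smul_eq_mul, mul_comm]⟩
  refine ⟨n₀, ?_⟩
  funext k
  apply Set.Subset.antisymm
  · intro f hf
    exact (mem_pol_iff s f).mpr (((hdvd _).mpr dvd_rfl) k f hf)
  · intro h hPol
    have hC : SComm s h (n₀ : ℤ) := (mem_pol_iff s h).mp hPol
    apply hD.2 k h
    intro A
    -- breakers: for j ∉ H there is a unary member of D not commuting with s^j at y
    have breaker : ∀ (j : ℤ), j ∉ H → ∀ y : X, ∃ v : X → X,
        ((fun a : Fin 1 → X => v (a 0)) ∈ D 0) ∧ v ((s ^ j) y) ≠ (s ^ j) (v y) := by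
      intro j hj y
      rw [memH] at hj
      push_neg at hj
      obtain ⟨kj, fj, hfj, hnc⟩ := hj
      rw [SComm] at hnc
      push_neg at hnc
      obtain ⟨b, hb⟩ := hnc
      choose u hu hub using fun c : Fin (kj + 1) => exists_equivariant s hs y (b c)
      refine ⟨fun x => fj (fun c => u c x), ?_, ?_⟩
      · refine hD.1.2 kj 0 fj (fun c => fun a : Fin 1 → X => u c (a 0)) hfj ?_
        intro c
        apply hDs 0
        intro a
        show u c (s (a 0)) = s (u c (a 0))
        simpa using hu c 1 (a 0)
      · show fj (fun c => u c ((s ^ j) y)) ≠ (s ^ j) (fj (fun c => u c y))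
        have h1 : (fun c => u c ((s ^ j) y)) = fun c => (s ^ j) (b c) := by
          funext c; rw [hu c j y, hub c]
        have h2 : (fun c => u c y) = b := funext fun c => hub c
        rw [h1, h2]
        exact hb
    have hv : ∀ p : (↥A × ↥A), ∃ v : X → X,
        ((fun a : Fin 1 → X => v (a 0)) ∈ D 0) ∧
        (∀ t : ℤ, t ∉ H →
          (fun i => (s ^ t) ((p.1 : Fin (k + 1) → X) i)) = (p.2 : Fin (k + 1) → X) →
          v ((s ^ t) ((p.1 : Fin (k + 1) → X) 0)) ≠
            (s ^ t) (v ((p.1 : Fin (k + 1) → X) 0))) := by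
      intro p
      by_cases hex : ∃ j : ℤ, j ∉ H ∧
          (fun i => (s ^ j) ((p.1 : Fin (k + 1) → X) i)) = (p.2 : Fin (k + 1) → X)
      · obtain ⟨j, hjH, hje⟩ := hex
        obtain ⟨v, hvD, hvb⟩ := breaker j hjH ((p.1 : Fin (k + 1) → X) 0)
        refine ⟨v, hvD, ?_⟩
        intro t htH hte
        have ht : t = j := zpow_inj s hs ((congrFun hte 0).trans (congrFun hje 0).symm)
        subst ht
        exact hvb
      · refine ⟨fun x => x, hD.1.1 0 0, ?_⟩
        intro t htH hte
        exact absurd ⟨t, htH, hte⟩ hex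
    choose v hvD hvbr using hv
    set N := Fintype.card (↥A × ↥A) with hN
    set E : (Fin (k + 1) ⊕ (↥A × ↥A)) ≃ Fin ((k + N) + 1) :=
      (Equiv.sumCongr (Equiv.refl (Fin (k + 1))) (Fintype.equivFin (↥A × ↥A))).trans
        (finSumFinEquiv.trans (finCongr (by omega))) with hE
    set comps : Fin ((k + N) + 1) → Op X k := fun i =>
      Sum.elim (fun (j : Fin (k + 1)) => fun (x : Fin (k + 1) → X) => x j)
               (fun (q : ↥A × ↥A) => fun (x : Fin (k + 1) → X) => v q (x 0))
               (E.symm i) with hcomps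
    set T : ↥A → (Fin ((k + N) + 1) → X) :=
      fun p => fun i => comps i (p : Fin (k + 1) → X) with hT
    have hTl : ∀ (p : ↥A) (j : Fin (k + 1)),
        T p (E (Sum.inl j)) = (p : Fin (k + 1) → X) j := by
      intro p j
      simp only [hT, hcomps, Equiv.symm_apply_apply, Sum.elim_inl]
    have hTr : ∀ (p : ↥A) (q : ↥A × ↥A),
        T p (E (Sum.inr q)) = v q ((p : Fin (k + 1) → X) 0) := by
      intro p q
      simp only [hT, hcomps, Equiv.symm_apply_apply, Sum.elim_inr]
    have hcon : ∀ (p q : ↥A) (t : ℤ), (fun i => (s ^ t) (T p i)) = T q →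
        (s ^ t) (h (p : Fin (k + 1) → X)) = h (q : Fin (k + 1) → X) := by
      intro p q t hpq
      have hcoord : ∀ j : Fin (k + 1),
          (s ^ t) ((p : Fin (k + 1) → X) j) = (q : Fin (k + 1) → X) j := by
        intro j
        have h1 := congrFun hpq (E (Sum.inl j))
        rw [hTl q j] at h1
        rw [← h1, hTl p j]
      have htup : (fun i => (s ^ t) ((p : Fin (k + 1) → X) i)) = (q : Fin (k + 1) → X) :=
        funext hcoord
      by_cases htH : t ∈ H
      · have hcs : SComm s h t := sComm_of_dvd s hC ((hdvd t).mp htH)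
        rw [← htup]
        exact (hcs _).symm
      · exfalso
        have hbr := hvbr (p, q) t htH htup
        have h2 := congrFun hpq (E (Sum.inr (p, q)))
        rw [hTr q (p, q), hTr p (p, q)] at h2
        rw [← hcoord 0] at h2
        exact hbr h2.symm
    obtain ⟨Φ, hΦpol, hΦT⟩ := exists_pol_interpolant s hs T
      (fun p => h (p : Fin (k + 1) → X)) hcon
    refine ⟨fun x => Φ (fun i => comps i x), ?_, ?_⟩
    · refine hD.1.2 (k + N) k Φ comps (hDs _ hΦpol) ?_
      intro i
      simp only [hcomps]
      cases hEi : E.symm i with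
      | inl j =>
        rw [Sum.elim_inl]
        exact hD.1.1 k j
      | inr q =>
        rw [Sum.elim_inr]
        exact hD.1.2 0 k (fun a : Fin 1 → X => v q (a 0))
          (fun _ => fun x : Fin (k + 1) → X => x 0) (hvD q) (fun _ => hD.1.1 k 0)
    · intro a ha
      exact hΦT ⟨a, ha⟩


lemma pol_zero_univ : Pol (s ^ 0) = fun k => (Set.univ : Set (Op X k)) := by
  funext k
  ext f
  simp only [Set.mem_univ, iff_true]
  intro a
  simp

end PolAux

/-- `n ↦ Pol (s ^ n)` is a lattice isomorphism from `(ℕ, ∣)`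
(with `1` least and `0` greatest, `Pol (s ^ 0) = 𝒪`) onto the interval
`[Pol s, 𝒪]` of local clones: it is injective, order-preserving and
-reflecting for divisibility vs. inclusion, and onto the local clones above
`Pol s`.  In particular there is no precomplete local clone above `Pol s`,
so the lattice of local clones is not dually atomic. -/
theorem pol_interval_iso_nat_dvd {X : Type*} [Infinite X] (s : Equiv.Perm X)
    (hs : NoCycles s) :
    (∀ m n : ℕ, m ∣ n ↔ ∀ k, Pol (s ^ m) k ⊆ Pol (s ^ n) k) ∧
    (∀ D : ∀ n, Set (Op X n), IsLocalClone D → (∀ k, Pol s k ⊆ D k) →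
      ∃! n : ℕ, D = Pol (s ^ n)) ∧
    (∀ D : ∀ n, Set (Op X n), IsLocalClone D → (∀ k, Pol s k ⊆ D k) →
      ¬ (D ≠ (fun k => (Set.univ : Set (Op X k))) ∧
        ∀ E : ∀ n, Set (Op X n), IsLocalClone E → (∀ k, D k ⊆ E k) → D ≠ E →
          E = (fun k => (Set.univ : Set (Op X k))))) := by
  classical
  have part1 : ∀ m n : ℕ, m ∣ n ↔ ∀ k, Pol (s ^ m) k ⊆ Pol (s ^ n) k := by
    intro m n
    constructor
    · intro hmn k
      exact PolAux.pol_mono s hmn k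
    · intro hsub
      exact PolAux.dvd_of_pol_subset s hs (hsub 0)
  have part2 : ∀ D : ∀ n, Set (Op X n), IsLocalClone D → (∀ k, Pol s k ⊆ D k) →
      ∃! n : ℕ, D = Pol (s ^ n) := by
    intro D hD hDs
    obtain ⟨n, hn⟩ := PolAux.pol_surj s hs D hD hDs
    refine ⟨n, hn, ?_⟩
    intro y hy
    have he : Pol (s ^ y) = Pol (s ^ n) := hy.symm.trans hn
    refine Nat.dvd_antisymm ?_ ?_
    · refine (part1 y n).mpr fun k x hx => ?_
      rw [← congrFun he k]; exact hx
    · refine (part1 n y).mpr fun k x hx => ?_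
      rw [congrFun he k]; exact hx
  refine ⟨part1, part2, ?_⟩
  rintro D hD hDs ⟨hne, hmax⟩
  obtain ⟨n, hn, -⟩ := part2 D hD hDs
  have hn0 : n ≠ 0 := by
    rintro rfl
    exact hne (hn.trans (PolAux.pol_zero_univ s))
  have hDE : ∀ k, D k ⊆ Pol (s ^ (2 * n)) k := by
    intro k
    rw [hn]
    exact PolAux.pol_mono s ⟨2, by ring⟩ k
  have hDne : D ≠ Pol (s ^ (2 * n)) := by
    rw [hn]
    intro hcon
    have hd : (2 * n) ∣ n := by
      refine (part1 (2 * n) n).mpr fun k x hx => ?_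
      rw [congrFun hcon k]; exact hx
    have := Nat.le_of_dvd (Nat.pos_of_ne_zero hn0) hd
    omega
  have huniv := hmax _ (PolAux.isLocalClone_pol (s ^ (2 * n))) hDE hDne
  have h0 : (0 : ℕ) ∣ 2 * n := by
    refine (part1 0 (2 * n)).mpr fun k x _ => ?_
    rw [congrFun huniv k]
    trivial
  have := Nat.eq_zero_of_zero_dvd h0
  omega
end

section
/- If H is any constant function on X, then the clone generated by Pol(s) ∪ {H} equals the full clone 𝒪 of all finitary operations on X. -/
/-- For any constant unary function `H`, the clone generated by
`Pol s ∪ {H}` is the full clone: every clone containing `Pol s` and `H`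
contains all operations. -/
theorem pol_with_constant_generates_all {X : Type*} [Infinite X]
    (s : Equiv.Perm X) (hs : NoCycles s) (c : X)
    (C : ∀ n, Set (Op X n)) (hC : IsClone C) (hCs : ∀ n, Pol s n ⊆ C n)
    (hH : (fun _ : Fin 1 → X => c) ∈ C 0) :
    ∀ n, C n = (Set.univ : Set (Op X n)) := by
  classical
  intro n
  apply Set.eq_univ_of_forall
  intro f
  -- uniqueness of the power moving `c` to a point
  have key : ∀ m m' : ℤ, (s ^ m) c = (s ^ m') c → m = m' := by
    intro m m' h
    have h2 : (s ^ (m - m')) c = c := by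
      have h3 : (s ^ (-m')) ((s ^ m) c) = (s ^ (-m')) ((s ^ m') c) := by rw [h]
      rw [← Equiv.Perm.mul_apply, ← Equiv.Perm.mul_apply, ← zpow_add, ← zpow_add] at h3
      simpa [sub_eq_add_neg, add_comm] using h3
    have := hs c (m - m') h2
    linarith
  set P : X → Prop := fun x => ∃ m : ℤ, (s ^ m) c = x with hP
  let k : X → ℤ := fun x => if h : P x then h.choose else 0
  have hk : ∀ x, P x → (s ^ (k x)) c = x := by
    intro x hx
    simp only [k, dif_pos hx]
    exact hx.choose_spec
  have hkc : k c = 0 := by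
    have hPc : P c := ⟨0, by simp⟩
    have := key (k c) 0 (by rw [hk c hPc]; simp)
    simpa using this
  -- the interpolating operation in Pol s
  let g : Op X (n+1) := fun a =>
    if h : P (a (Fin.last (n+1))) then
      (s ^ (k (a (Fin.last (n+1)))))
        (f (fun i => (s ^ (-(k (a (Fin.last (n+1)))))) (a i.castSucc)))
    else a (Fin.last (n+1))
  have hstep : ∀ (m : ℤ) (y : X), (s ^ (m+1)) y = s ((s ^ m) y) := by
    intro m y
    rw [add_comm, zpow_add, zpow_one, Equiv.Perm.mul_apply]
  have hstep' : ∀ (m : ℤ) (y : X), (s ^ (m-1)) y = s.symm ((s ^ m) y) := by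
    intro m y
    have := hstep (m-1) y
    rw [sub_add_cancel] at this
    rw [this, Equiv.symm_apply_apply]
  have hg : g ∈ Pol s (n+1) := by
    intro a
    set x := a (Fin.last (n+1)) with hx
    by_cases hp : P x
    · have hpsx : P (s x) := by
        obtain ⟨m, hm⟩ := hp
        exact ⟨m + 1, by rw [hstep, hm]⟩
      have hksx : k (s x) = k x + 1 := by
        apply key
        rw [hk _ hpsx, hstep, hk _ hp]
      have hinv : ∀ y : X, (s ^ (-(k x + 1))) (s y) = (s ^ (-(k x))) y := by
        intro y
        calc (s ^ (-(k x + 1))) (s y) = (s ^ (-(k x + 1)) * s ^ (1:ℤ)) y := by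
              rw [Equiv.Perm.mul_apply, zpow_one]
          _ = (s ^ (-(k x))) y := by rw [← zpow_add]; norm_num
      show g (fun i => s (a i)) = s (g a)
      have hlast : (fun i => s (a i)) (Fin.last (n+1)) = s x := rfl
      simp only [g, hlast, ← hx, dif_pos hpsx, dif_pos hp, hksx]
      have harg : (fun i : Fin (n+1) => (s ^ (-(k x + 1))) (s (a i.castSucc)))
          = fun i : Fin (n+1) => (s ^ (-(k x))) (a i.castSucc) :=
        funext fun i => hinv _
      rw [harg, hstep]
    · have hpsx : ¬ P (s x) := by
        rintro ⟨m, hm⟩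
        exact hp ⟨m - 1, by rw [hstep', hm, Equiv.symm_apply_apply]⟩
      show g (fun i => s (a i)) = s (g a)
      have hlast : (fun i => s (a i)) (Fin.last (n+1)) = s x := rfl
      simp only [g, hlast, ← hx, dif_neg hpsx, dif_neg hp]
  have hgC : g ∈ C (n+1) := hCs (n+1) hg
  -- the constant of arity n
  have hconst : (fun _ : Fin (n+1) → X => c) ∈ C n := by
    have := hC.2 0 n (fun _ : Fin 1 → X => c) (fun _ => fun x => x 0) hH
      (fun _ => hC.1 n 0)
    simpa using this
  -- compose
  let h : Fin (n+2) → Op X n := fun i =>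
    if hi : (i : ℕ) < n + 1 then (fun x => x ⟨i, hi⟩) else (fun _ => c)
  have hh : ∀ i, h i ∈ C n := by
    intro i
    by_cases hi : (i : ℕ) < n + 1
    · simpa [h, dif_pos hi, Nat.le_of_lt_succ hi] using hC.1 n ⟨i, hi⟩
    · simpa [h, dif_neg hi, show ¬ (i:ℕ) ≤ n by omega] using hconst
  have hcomp := hC.2 (n+1) n g h hgC hh
  have heq : (fun x => g (fun i => h i x)) = f := by
    funext x
    have hlastval : h (Fin.last (n+1)) x = c := by
      simp [h, Fin.last]
    have hPc : P c := ⟨0, by simp⟩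
    have hlast2 : (fun i => h i x) (Fin.last (n+1)) = c := hlastval
    simp only [g, hlast2, dif_pos hPc, hkc]
    simp only [zpow_zero, neg_zero, Equiv.Perm.one_apply]
    congr 1
    funext i
    have hi : ((i.castSucc : Fin (n+2)) : ℕ) < n + 1 := by exact i.is_lt
    simp [h, dif_pos hi, Fin.castSucc, Nat.le_of_lt_succ i.is_lt]
  rw [heq] at hcomp
  exact hcomp
end

section
/- Let (S,∨) be a semilattice and R ⊆ S × S. The following are equivalent: (1) θ_R := {(x,y) : xRy and yRx} is a semilattice congruence and xRy iff x/θ_R ≤ y/θ_R; (2) R is reflexive and transitive, x ≤ y implies xRy, and xRz together with yRz implies (x∨y)Rz. -/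
/-- A semilattice congruence: an equivalence relation compatible with `⊔`. -/
def IsSemilatticeCong {S : Type*} [SemilatticeSup S] (θ : S → S → Prop) : Prop :=
  Equivalence θ ∧ ∀ a b c d : S, θ a b → θ c d → θ (a ⊔ c) (b ⊔ d)

/-- A congruence order: reflexive, transitive, extends `≤`, and
`x R z` and `y R z` imply `(x ⊔ y) R z`. -/
def IsCongOrder {S : Type*} [SemilatticeSup S] (R : S → S → Prop) : Prop :=
  Reflexive R ∧ Transitive R ∧ (∀ x y : S, x ≤ y → R x y) ∧
  (∀ x y z : S, R x z → R y z → R (x ⊔ y) z)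

/-- The symmetrization `θ_R` of a relation `R`. -/
def thetaOf {S : Type*} (R : S → S → Prop) : S → S → Prop :=
  fun x y => R x y ∧ R y x

/-- The order induced by a congruence `θ` on representatives:
`x/θ ≤ y/θ` iff `(x ⊔ y) θ y`. -/
def quotOrderOf {S : Type*} [SemilatticeSup S] (θ : S → S → Prop) : S → S → Prop :=
  fun x y => θ (x ⊔ y) y

/-- For a relation `R` on a semilattice `(S, ⊔)`, the following are
equivalent: (1) `θ_R` is a semilattice congruence and `x R y` iff
`x/θ_R ≤ y/θ_R` (i.e. `(x ⊔ y) θ_R y`); (2) `R` is a congruence order. -/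
theorem congOrder_characterization {S : Type*} [SemilatticeSup S]
    (R : S → S → Prop) :
    (IsSemilatticeCong (thetaOf R) ∧
      ∀ x y : S, R x y ↔ thetaOf R (x ⊔ y) y) ↔ IsCongOrder R := by
  constructor
  · rintro ⟨⟨heq, hcomp⟩, hiff⟩
    refine ⟨?_, ?_, ?_, ?_⟩
    · intro x
      rw [hiff]
      simpa using heq.refl x
    · intro x y z hxy hyz
      rw [hiff] at hxy hyz ⊢
      have h1 := hcomp _ _ _ _ hxy hyz
      have h1' : thetaOf R (x ⊔ y ⊔ z) (y ⊔ z) := by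
        have : x ⊔ y ⊔ (y ⊔ z) = x ⊔ y ⊔ z := by
          apply le_antisymm <;> simp [sup_le_iff, le_sup_of_le_left, le_sup_of_le_right, le_sup_left, le_sup_right]
        rwa [this] at h1
      have h2 : thetaOf R (x ⊔ y ⊔ z) z := heq.trans h1' hyz
      have h3 := hcomp (x ⊔ z) (x ⊔ z) _ _ (heq.refl _) h2
      have e1 : x ⊔ z ⊔ (x ⊔ y ⊔ z) = x ⊔ y ⊔ z := by
        apply le_antisymm <;> simp [sup_le_iff, le_sup_of_le_left, le_sup_of_le_right, le_sup_left, le_sup_right]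
      have e2 : x ⊔ z ⊔ z = x ⊔ z := by
        apply le_antisymm <;> simp [sup_le_iff, le_sup_of_le_left, le_sup_of_le_right, le_sup_left, le_sup_right]
      rw [e1, e2] at h3
      exact heq.trans (heq.symm h3) h2
    · intro x y hxy
      rw [hiff, sup_eq_right.mpr hxy]
      exact heq.refl y
    · intro x y z hxz hyz
      rw [hiff] at hxz hyz ⊢
      have h := hcomp _ _ _ _ hxz hyz
      have e1 : x ⊔ z ⊔ (y ⊔ z) = x ⊔ y ⊔ z := by
        apply le_antisymm <;> simp [sup_le_iff, le_sup_of_le_left, le_sup_of_le_right, le_sup_left, le_sup_right]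
      rw [e1, sup_idem] at h
      exact h
  · rintro ⟨hrefl, htrans, hle, hsup⟩
    constructor
    · constructor
      · exact ⟨fun x => ⟨hrefl x, hrefl x⟩, fun ⟨h1, h2⟩ => ⟨h2, h1⟩,
          fun ⟨h1, h2⟩ ⟨h3, h4⟩ => ⟨htrans h1 h3, htrans h4 h2⟩⟩
      · rintro a b c d ⟨hab, hba⟩ ⟨hcd, hdc⟩
        constructor
        · exact hsup _ _ _ (htrans hab (hle _ _ le_sup_left))
            (htrans hcd (hle _ _ le_sup_right))
        · exact hsup _ _ _ (htrans hba (hle _ _ le_sup_left))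
            (htrans hdc (hle _ _ le_sup_right))
    · intro x y
      constructor
      · intro hxy
        exact ⟨hsup _ _ _ hxy (hrefl y), hle _ _ le_sup_right⟩
      · rintro ⟨h1, _⟩
        exact htrans (hle _ _ le_sup_left) h1
end

section
/- The maps R ↦ θ_R (where θ_R = {(x,y) : xRy and yRx}) and θ ↦ {(x,y) : x/θ ≤ y/θ} are mutually inverse, monotone bijections between the congruence orders on a semilattice (S,∨) and the congruences of (S,∨). -/
/-- `R ↦ θ_R` and `θ ↦ (x,y) ↦ x/θ ≤ y/θ` are mutually inverse
monotone bijections between congruence orders and congruences on `(S, ⊔)`. -/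
theorem congOrder_cong_bijection {S : Type*} [SemilatticeSup S] :
    (∀ R : S → S → Prop, IsCongOrder R →
      IsSemilatticeCong (thetaOf R) ∧ quotOrderOf (thetaOf R) = R) ∧
    (∀ θ : S → S → Prop, IsSemilatticeCong θ →
      IsCongOrder (quotOrderOf θ) ∧ thetaOf (quotOrderOf θ) = θ) ∧
    (∀ R R' : S → S → Prop, IsCongOrder R → IsCongOrder R' →
      (∀ x y, R x y → R' x y) → ∀ x y, thetaOf R x y → thetaOf R' x y) ∧
    (∀ θ θ' : S → S → Prop, IsSemilatticeCong θ → IsSemilatticeCong θ' →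
      (∀ x y, θ x y → θ' x y) → ∀ x y, quotOrderOf θ x y → quotOrderOf θ' x y) := by

  refine ⟨?_, ?_, ?_, ?_⟩
  · rintro R ⟨hrefl, htrans, hle, hjoin⟩
    constructor
    · refine ⟨⟨fun x => ⟨hrefl x, hrefl x⟩, fun ⟨h1, h2⟩ => ⟨h2, h1⟩,
        fun ⟨h1, h2⟩ ⟨h3, h4⟩ => ⟨htrans h1 h3, htrans h4 h2⟩⟩, ?_⟩
      rintro a b c d ⟨hab, hba⟩ ⟨hcd, hdc⟩
      exact ⟨hjoin _ _ _ (htrans hab (hle _ _ le_sup_left)) (htrans hcd (hle _ _ le_sup_right)),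
        hjoin _ _ _ (htrans hba (hle _ _ le_sup_left)) (htrans hdc (hle _ _ le_sup_right))⟩
    · funext x y
      apply propext
      constructor
      · rintro ⟨h1, _⟩
        exact htrans (hle _ _ le_sup_left) h1
      · intro h
        exact ⟨hjoin _ _ _ h (hrefl y), hle _ _ le_sup_right⟩
  · rintro θ ⟨⟨hr, hs, ht⟩, hc⟩
    constructor
    · refine ⟨fun x => by simpa [quotOrderOf] using hr x, ?_, ?_, ?_⟩
      · intro x y z h1 h2
        have h3 : θ (x ⊔ y ⊔ z) (y ⊔ z) := by
          simpa [sup_assoc] using hc _ _ _ _ h1 (hr z)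
        have h4 : θ (x ⊔ y ⊔ z) z := ht h3 h2
        have h5 : θ (x ⊔ y ⊔ z ⊔ (x ⊔ z)) (z ⊔ (x ⊔ z)) := hc _ _ _ _ h4 (hr _)
        have e1 : x ⊔ y ⊔ z ⊔ (x ⊔ z) = x ⊔ y ⊔ z := by
          rw [sup_eq_left]; exact sup_le (le_sup_left.trans le_sup_left) le_sup_right
        have e2 : z ⊔ (x ⊔ z) = x ⊔ z := by
          rw [sup_comm, sup_eq_left]; exact le_sup_right
        rw [e1, e2] at h5
        exact ht (hs h5) h4
      · intro x y hxy
        show θ (x ⊔ y) y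
        rw [sup_eq_right.mpr hxy]; exact hr y
      · intro x y z h1 h2
        have := hc _ _ _ _ h1 h2
        have e : x ⊔ z ⊔ (y ⊔ z) = x ⊔ y ⊔ z := by
          rw [sup_sup_sup_comm, sup_idem]
        rw [e, sup_idem] at this
        exact this
    · funext x y
      apply propext
      constructor
      · rintro ⟨h1, h2⟩
        have h2' : θ (y ⊔ x) x := h2
        rw [sup_comm] at h2'
        exact ht (hs h2') h1
      · intro h
        refine ⟨?_, ?_⟩
        · simpa [quotOrderOf] using hc _ _ _ _ h (hr y)
        · simpa [quotOrderOf] using hc _ _ _ _ (hs h) (hr x)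
  · rintro R R' _ _ hmono x y ⟨h1, h2⟩
    exact ⟨hmono _ _ h1, hmono _ _ h2⟩
  · rintro θ θ' _ _ hmono x y h
    exact hmono _ _ h
end

section
/- For a semilattice (S,∨) and a congruence order ⊑ on S, the set ℰ(⊑) = ⋃_k { f : S^k → S : ∀x̄, f(x̄) ⊑ x_1 ∨ ⋯ ∨ x_k } is a local clone, and ℰ(⊑) equals the intersection over a ∈ S of Pol({x : x ⊑ a}), the clones of operations preserving the sets {x : x ⊑ a}. -/
/-- The join of the entries of a tuple. -/
def vsup {S : Type*} [SemilatticeSup S] {n : ℕ} (x : Fin (n + 1) → S) : S :=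
  Finset.univ.sup' ⟨0, Finset.mem_univ 0⟩ x

/-- `ℰ(R)`: the operations `f` with `f(x̄) R (x₁ ⊔ ⋯ ⊔ x_k)` for all `x̄`. -/
def EE {S : Type*} [SemilatticeSup S] (R : S → S → Prop) : ∀ n, Set (Op S n) :=
  fun n => {f | ∀ x : Fin (n + 1) → S, R (f x) (vsup x)}

/-- The relation `⊑_𝒞` induced by a clone `𝒞`: `x ⊑_𝒞 y` iff some unary
member of `𝒞` maps `y` to `x`. -/
def sqsubOf {S : Type*} (C : ∀ n, Set (Op S n)) : S → S → Prop :=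
  fun x y => ∃ f ∈ C 0, f (fun _ => y) = x

/-- `S` is downward directed: any two elements have a common lower bound. -/
def DownDirected (S : Type*) [SemilatticeSup S] : Prop :=
  ∀ a b : S, ∃ c : S, c ≤ a ∧ c ≤ b

/-- For a congruence order `⊑` on a semilattice, `ℰ(⊑)` is a local
clone, and it equals the intersection over `a ∈ S` of the clones preserving the
sets `{x : x ⊑ a}`. -/
theorem EE_localClone_and_inter {S : Type*} [SemilatticeSup S]
    (R : S → S → Prop) (hR : IsCongOrder R) :
    IsLocalClone (EE R) ∧
    ∀ n, EE R n = ⋂ a : S,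
      {f : Op S n | ∀ x : Fin (n + 1) → S, (∀ i, R (x i) a) → R (f x) a} := by
  obtain ⟨hrefl, htrans, hle, hjoin⟩ := hR
  have hsup : ∀ {n : ℕ} (x : Fin (n + 1) → S) (a : S),
      (∀ i, R (x i) a) → R (vsup x) a := by
    intro n x a h
    exact Finset.sup'_induction _ _ (fun b hb c hc => hjoin b c a hb hc)
      (fun i _ => h i)
  have hself : ∀ {n : ℕ} (x : Fin (n + 1) → S) (i : Fin (n + 1)),
      R (x i) (vsup x) := by
    intro n x i
    exact hle _ _ (Finset.le_sup' x (Finset.mem_univ i))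
  constructor
  · constructor
    · constructor
      · intro n i x
        exact hself x i
      · intro m n f g hf hg x
        exact htrans (hf fun i => g i x) (hsup _ _ fun i => hg i x)
    · intro n f h x
      obtain ⟨g, hg, hgf⟩ := h {x}
      have := hg x
      rwa [hgf x (Finset.mem_singleton_self x)] at this
  · intro n
    ext f
    simp only [Set.mem_iInter, Set.mem_setOf_eq, EE]
    constructor
    · intro hf a x hx
      exact htrans (hf x) (hsup x a hx)
    · intro hf x
      exact hf (vsup x) x (hself x)
end

section
/- Let (S,∨) be a downward directed semilattice, 𝒞₂ = ℰ(≤) the clone of operations f with f(x̄) ≤ x_1 ∨ ⋯ ∨ x_k. For any local clone 𝒞 ⊇ 𝒞₂, the relation ⊑_𝒞 := {(x,y) : ∃ unary f ∈ 𝒞, f(y) = x} is a congruence order on (S,∨). -/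
/-- For a downward directed semilattice `S` with `𝒞₂ = ℰ(≤)`,
and any local clone `𝒞 ⊇ 𝒞₂`, the relation `⊑_𝒞` is a congruence order. -/
theorem sqsub_isCongOrder {S : Type*} [SemilatticeSup S]
    (hdir : DownDirected S) (C : ∀ n, Set (Op S n)) (hC : IsLocalClone C)
    (hC2 : ∀ n, EE (· ≤ · : S → S → Prop) n ⊆ C n) :
    IsCongOrder (sqsubOf C) := by
  constructor
  · -- reflexive
    intro x
    exact ⟨fun a => a 0, hC.1.1 0 0, rfl⟩
  refine ⟨?_, ?_, ?_⟩
  · -- transitive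
    rintro x y z ⟨f, hf, hfx⟩ ⟨g, hg, hgy⟩
    refine ⟨fun a => f (fun _ => g a), hC.1.2 0 0 f (fun _ => g) hf (fun _ => hg), ?_⟩
    simp only [hgy, hfx]
  · -- extends ≤
    intro x y hxy
    classical
    refine ⟨fun a => if a 0 = y then x else (hdir x (a 0)).choose, hC2 0 ?_, by simp⟩
    intro a
    have hle : vsup a = a 0 := by
      simp [vsup]
    rw [hle]
    dsimp only
    split
    · next h => rw [h]; exact hxy
    · exact (hdir x (a 0)).choose_spec.2
  · -- join
    rintro x y z ⟨f, hf, hfx⟩ ⟨g, hg, hgy⟩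
    have hj : (fun a : Fin 2 → S => a 0 ⊔ a 1) ∈ C 1 := by
      apply hC2 1
      intro a
      exact sup_le (Finset.le_sup' a (Finset.mem_univ 0)) (Finset.le_sup' a (Finset.mem_univ 1))
    refine ⟨fun a => (fun i : Fin 2 => ![f, g] i a) 0 ⊔ (fun i : Fin 2 => ![f, g] i a) 1,
      hC.1.2 1 0 _ ![f, g] hj ?_, ?_⟩
    · intro i
      fin_cases i <;> simpa
    · simp [hfx, hgy]
end

section
/- Let (S,∨) be a downward directed semilattice and 𝒞₂ = ℰ(≤). Every local clone 𝒞 with 𝒞₂ ⊆ 𝒞 satisfies 𝒞 = ℰ(⊑_𝒞). Consequently the interval [𝒞₂, 𝒪_S] in the lattice of local clones on S is isomorphic to the congruence lattice Con(S,∨). -/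
section Aux
variable {S : Type*} [SemilatticeSup S]

lemma le_vsup {n : ℕ} (x : Fin (n + 1) → S) (i : Fin (n + 1)) : x i ≤ vsup x :=
  Finset.le_sup' x (Finset.mem_univ i)

lemma vsup_le {n : ℕ} {x : Fin (n + 1) → S} {z : S} (h : ∀ i, x i ≤ z) : vsup x ≤ z :=
  Finset.sup'_le _ _ fun i _ => h i

lemma vsup_fin1 (x : Fin 1 → S) : vsup x = x 0 :=
  le_antisymm (vsup_le fun i => by rw [Fin.eq_zero i]) (le_vsup x 0)

lemma vsup_mem_EE {n : ℕ} : (vsup : Op S n) ∈ EE (· ≤ · : S → S → Prop) n :=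
  fun _ => le_rfl

lemma clone_sup {C : ∀ n, Set (Op S n)} (hC : IsClone C)
    (h2 : ∀ n, EE (· ≤ · : S → S → Prop) n ⊆ C n)
    {n : ℕ} {f g : Op S n} (hf : f ∈ C n) (hg : g ∈ C n) :
    (fun y => f y ⊔ g y) ∈ C n := by
  have hs : (fun z : Fin 2 → S => z 0 ⊔ z 1) ∈ C 1 :=
    h2 1 fun z => sup_le (le_vsup z 0) (le_vsup z 1)
  have hcomp := hC.2 1 n (fun z => z 0 ⊔ z 1) (fun i => if i = 0 then f else g) hs
    (fun i => by split_ifs <;> assumption)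
  simpa using hcomp

lemma congOrder_sqsub {C : ∀ n, Set (Op S n)} (hC : IsClone C)
    (h2 : ∀ n, EE (· ≤ · : S → S → Prop) n ⊆ C n) : IsCongOrder (sqsubOf C) := by
  classical
  refine ⟨fun x => ⟨fun y => y 0, hC.1 0 0, rfl⟩, ?_, ?_, ?_⟩
  · rintro x y z ⟨f, hf, hfy⟩ ⟨g, hg, hgz⟩
    refine ⟨fun w => f (fun _ => g w), hC.2 0 0 f (fun _ => g) hf fun _ => hg, ?_⟩
    show f (fun _ => g (fun _ => z)) = x
    rw [show (fun _ : Fin 1 => g (fun _ : Fin 1 => z)) = (fun _ => y) from funext fun _ => hgz, hfy]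
  · intro x y hxy
    refine ⟨fun a => if a 0 = y then x else a 0, h2 0 ?_, by simp⟩
    intro a; rw [vsup_fin1]
    dsimp only
    split_ifs with h
    · rw [h]; exact hxy
    · exact le_rfl
  · rintro x y z ⟨f, hf, hfz⟩ ⟨g, hg, hgz⟩
    exact ⟨fun w => f w ⊔ g w, clone_sup hC h2 hf hg, by show f _ ⊔ g _ = x ⊔ y; rw [hfz, hgz]⟩

lemma EE_isLocalClone {R : S → S → Prop} (hR : IsCongOrder R) : IsLocalClone (EE R) := by
  obtain ⟨hr, ht, hle, hj⟩ := hR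
  refine ⟨⟨fun n i x => hle _ _ (le_vsup x i), ?_⟩, ?_⟩
  · intro m n f g hf hg x
    refine ht (hf _) ?_
    show R (Finset.univ.sup' ⟨0, Finset.mem_univ 0⟩ (fun i => g i x)) (vsup x)
    exact Finset.sup'_induction (p := fun a => R a (vsup x)) _ _
      (fun a ha b hb => hj a b _ ha hb) fun i _ => hg i x
  · intro n f hloc x
    obtain ⟨g, hg, hgf⟩ := hloc {x}
    exact (hgf x (Finset.mem_singleton_self x)) ▸ hg x

lemma EE_le_mono {R R' : S → S → Prop} (h : ∀ x y, R x y → R' x y) (n : ℕ) :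
    EE R n ⊆ EE R' n := fun f hf x => h _ _ (hf x)

lemma C2_le_EE {R : S → S → Prop} (hR : IsCongOrder R) (n : ℕ) :
    EE (· ≤ · : S → S → Prop) n ⊆ EE R n :=
  EE_le_mono (fun x y h => hR.2.2.1 x y h) n

end Aux

section Aux2
variable {S : Type*} [SemilatticeSup S]

lemma quotOrder_congOrder {θ : S → S → Prop} (hθ : IsSemilatticeCong θ) :
    IsCongOrder (quotOrderOf θ) := by
  obtain ⟨⟨hr, hs, ht⟩, hc⟩ := hθ
  refine ⟨fun x => ?_, ?_, ?_, ?_⟩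
  · show θ (x ⊔ x) x; simpa using hr x
  · intro x y z hxy hyz
    have h1 : θ (x ⊔ y ⊔ z) (y ⊔ z) := hc _ _ _ _ hxy (hr z)
    have h2 : θ (x ⊔ y ⊔ z) z := ht h1 hyz
    have h3 : θ (x ⊔ y ⊔ z ⊔ (x ⊔ z)) (z ⊔ (x ⊔ z)) := hc _ _ _ _ h2 (hr (x ⊔ z))
    have e1 : x ⊔ y ⊔ z ⊔ (x ⊔ z) = x ⊔ y ⊔ z :=
      sup_eq_left.mpr (sup_le ((le_sup_left).trans le_sup_left) le_sup_right)
    have e2 : z ⊔ (x ⊔ z) = x ⊔ z := sup_eq_right.mpr le_sup_right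
    rw [e1, e2] at h3
    exact ht (hs h3) h2
  · intro x y hxy; show θ (x ⊔ y) y; rw [sup_eq_right.mpr hxy]; exact hr y
  · intro x y z h1 h2
    have h3 := hc _ _ _ _ h1 h2
    have e : x ⊔ z ⊔ (y ⊔ z) = x ⊔ y ⊔ z := by
      refine le_antisymm (sup_le (sup_le ?_ ?_) (sup_le ?_ ?_)) (sup_le (sup_le ?_ ?_) ?_) <;>
        simp [le_sup_left, le_sup_right, le_sup_of_le_left, le_sup_of_le_right]
    show θ (x ⊔ y ⊔ z) z
    rw [← e]; simpa using h3

lemma theta_cong {R : S → S → Prop} (hR : IsCongOrder R) : IsSemilatticeCong (thetaOf R) := by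
  obtain ⟨hr, ht, hle, hj⟩ := hR
  refine ⟨⟨fun x => ⟨hr x, hr x⟩, fun h => ⟨h.2, h.1⟩, fun h1 h2 => ⟨ht h1.1 h2.1, ht h2.2 h1.2⟩⟩, ?_⟩
  intro a b c d hab hcd
  exact ⟨hj _ _ _ (ht hab.1 (hle _ _ le_sup_left)) (ht hcd.1 (hle _ _ le_sup_right)),
         hj _ _ _ (ht hab.2 (hle _ _ le_sup_left)) (ht hcd.2 (hle _ _ le_sup_right))⟩

lemma quot_theta {R : S → S → Prop} (hR : IsCongOrder R) : quotOrderOf (thetaOf R) = R := by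
  obtain ⟨hr, ht, hle, hj⟩ := hR
  funext x y; apply propext
  constructor
  · rintro ⟨h1, h2⟩
    exact ht (hle _ _ le_sup_left) h1
  · intro h
    exact ⟨hj _ _ _ h (hr y), hle _ _ le_sup_right⟩

lemma theta_quot {θ : S → S → Prop} (hθ : IsSemilatticeCong θ) :
    thetaOf (quotOrderOf θ) = θ := by
  obtain ⟨⟨hr, hs, ht⟩, hc⟩ := hθ
  funext x y; apply propext
  constructor
  · rintro ⟨h1, h2⟩
    have h1' : θ (x ⊔ y) y := h1
    have h2' : θ (y ⊔ x) x := h2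
    rw [sup_comm] at h2'
    exact ht (hs h2') h1'
  · intro h
    exact ⟨by simpa [quotOrderOf] using hc _ _ _ _ h (hr y), by simpa [quotOrderOf] using hc _ _ _ _ (hs h) (hr x)⟩

lemma sqsub_EE {R : S → S → Prop} (hR : IsCongOrder R) : sqsubOf (EE R) = R := by
  classical
  obtain ⟨hr, ht, hle, hj⟩ := hR
  funext x y; apply propext
  constructor
  · rintro ⟨g, hg, hgy⟩
    have h := hg (fun _ => y)
    rwa [hgy, vsup_fin1] at h
  · intro hxy
    refine ⟨fun a => if a 0 = y then x else a 0, ?_, by simp⟩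
    intro a; rw [vsup_fin1]; dsimp only
    split_ifs with h
    · rw [h]; exact hxy
    · exact hr _

end Aux2

section Main
variable {S : Type*} [SemilatticeSup S]

lemma supmem_sup' {C : ∀ n, Set (Op S n)} (hC : IsClone C)
    (h2 : ∀ n, EE (· ≤ · : S → S → Prop) n ⊆ C n) {n : ℕ}
    (h : (Fin (n + 1) → S) → Op S n)
    (T : Finset (Fin (n + 1) → S)) (hT : T.Nonempty) (hmem : ∀ l ∈ T, h l ∈ C n) :
    (fun y => T.sup' hT (fun l => h l y)) ∈ C n := by
  induction hT using Finset.Nonempty.cons_induction with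
  | singleton a => simpa using hmem a (Finset.mem_singleton_self a)
  | cons a s ha hs ih =>
    have e : (fun y => (Finset.cons a s ha).sup' (Finset.cons_nonempty ha) (fun l => h l y))
        = fun y => h a y ⊔ s.sup' hs (fun l => h l y) := by
      funext y; rw [Finset.sup'_cons]
    rw [e]
    exact clone_sup hC h2 (hmem a (Finset.mem_cons_self a s))
      (ih fun l hl => hmem l (Finset.mem_cons_of_mem hl))

theorem main_eq (hdir : DownDirected S) (C : ∀ n, Set (Op S n)) (hC : IsLocalClone C)
    (h2 : ∀ n, EE (· ≤ · : S → S → Prop) n ⊆ C n) : C = EE (sqsubOf C) := by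
  classical
  funext n
  apply Set.eq_of_subset_of_subset
  · -- easy direction : C ⊆ EE (sqsubOf C)
    intro f hf x
    refine ⟨fun y => f (fun i => if y 0 = vsup x then x i else y 0),
      hC.1.2 n 0 f (fun i y => if y 0 = vsup x then x i else y 0) hf (fun i => h2 0 ?_), ?_⟩
    · intro y; rw [vsup_fin1]; dsimp only
      split_ifs with h
      · rw [h]; exact le_vsup x i
      · exact le_rfl
    · simp
  · -- hard direction : EE (sqsubOf C) ⊆ C
    intro f hf
    apply hC.2 n f
    intro A
    rcases A.eq_empty_or_nonempty with rfl | hA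
    · exact ⟨fun x => x 0, hC.1.1 n 0, by simp⟩
    have hf' : ∀ x : Fin (n + 1) → S, ∃ g ∈ C 0, g (fun _ => vsup x) = f x := hf
    choose u hu1 hu2 using hf'
    choose c hc1 hc2 using fun x => hdir (f x) (vsup x)
    -- the "detector" operations
    set B : (Fin (n + 1) → S) → Op S (n + 1) := fun l w =>
      if (fun i => w i.succ) = l ∧ w 0 = u l (fun _ => vsup l) then f l
      else if (fun i => w i.succ) ∈ A then c (fun i => w i.succ)
      else vsup w with hBdef
    have hB : ∀ l, B l ∈ EE (· ≤ · : S → S → Prop) (n + 1) := by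
      intro l w
      show B l w ≤ vsup w
      rw [hBdef]; dsimp only
      split_ifs with h1 h3
      · rw [← hu2 l, ← h1.2]; exact le_vsup w 0
      · exact le_trans (hc2 _) (vsup_le fun i => le_vsup w i.succ)
      · exact le_rfl
    -- the patched unary-composed operations
    set h : (Fin (n + 1) → S) → Op S n := fun l y =>
      B l (Fin.cases (u l (fun _ => vsup y)) y) with hhdef
    have hu0 : ∀ l, (fun y : Fin (n + 1) → S => u l (fun _ => vsup y)) ∈ C n := by
      intro l
      exact hC.1.2 0 n (u l) (fun _ => vsup) (hu1 l) (fun _ => h2 n vsup_mem_EE)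
    have hhC : ∀ l, h l ∈ C n := by
      intro l
      have hcomp := hC.1.2 (n + 1) n (B l)
        (Fin.cases (motive := fun _ => Op S n) (fun y => u l (fun _ => vsup y)) (fun j y => y j))
        (h2 (n + 1) (hB l)) ?_
      · have einner : ∀ x : Fin (n + 1) → S,
            (fun i => Fin.cases (motive := fun _ => Op S n) (fun y => u l (fun _ => vsup y))
              (fun j y => y j) i x) = Fin.cases (u l (fun _ => vsup x)) x := by
          intro x; funext i
          refine Fin.cases ?_ (fun j => ?_) i <;> simp
        have e : h l = fun x => B l (fun i =>
            Fin.cases (motive := fun _ => Op S n) (fun y => u l (fun _ => vsup y))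
              (fun j y => y j) i x) := by
          funext x
          show B l (Fin.cases (u l (fun _ => vsup x)) x) = _
          rw [einner x]
        rw [e]; exact hcomp
      · intro i
        refine Fin.cases ?_ (fun j => ?_) i
        · simpa using hu0 l
        · simpa using hC.1.1 n j
    have hsucc : ∀ (z : S) (a : Fin (n + 1) → S),
        (fun i : Fin (n + 1) => (Fin.cases (motive := fun _ => S) z a) i.succ) = a := by
      intro z a; funext i; simp
    have heval_self : ∀ a, h a a = f a := by
      intro a
      show B a (Fin.cases (u a (fun _ => vsup a)) a) = f a
      rw [hBdef]; dsimp only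
      rw [if_pos ⟨hsucc _ a, by simp⟩]
    have heval_other : ∀ a ∈ A, ∀ l, l ≠ a → h l a ≤ f a := by
      intro a ha l hla
      show B l (Fin.cases (u l (fun _ => vsup a)) a) ≤ f a
      rw [hBdef]; dsimp only
      rw [if_neg, if_pos]
      · exact hc1 a
      · rw [hsucc _ a]; exact ha
      · rintro ⟨hh, -⟩
        rw [hsucc _ a] at hh
        exact hla hh.symm
    refine ⟨fun y => A.sup' hA (fun l => h l y), supmem_sup' hC.1 h2 h A hA (fun l _ => hhC l), ?_⟩
    intro a ha
    refine le_antisymm (Finset.sup'_le _ _ ?_) ?_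
    · intro l hl
      by_cases h' : l = a
      · subst h'; rw [heval_self l]
      · exact heval_other a ha l h'
    · exact (heval_self a) ▸ Finset.le_sup' (fun l => h l a) ha

end Main

section Final
variable {S : Type*} [SemilatticeSup S]

lemma theta_sqsub_mono {C C' : ∀ n, Set (Op S n)} (h : ∀ n, C n ⊆ C' n) :
    ∀ x y : S, thetaOf (sqsubOf C) x y → thetaOf (sqsubOf C') x y := by
  rintro x y ⟨⟨f, hf, e⟩, ⟨g, hg, e'⟩⟩
  exact ⟨⟨f, h 0 hf, e⟩, ⟨g, h 0 hg, e'⟩⟩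

theorem interval_iso_congLattice' {S : Type*} [SemilatticeSup S]
    (hdir : DownDirected S) :
    (∀ C : ∀ n, Set (Op S n), IsLocalClone C →
      (∀ n, EE (· ≤ · : S → S → Prop) n ⊆ C n) → C = EE (sqsubOf C)) ∧
    ∃ e : {C : ∀ n, Set (Op S n) //
            IsLocalClone C ∧ ∀ n, EE (· ≤ · : S → S → Prop) n ⊆ C n} ≃o
          {θ : S → S → Prop // IsSemilatticeCong θ},
      ∀ C, (e C : S → S → Prop) = thetaOf (sqsubOf C.1) := by
  classical
  refine ⟨fun C hC h2 => main_eq hdir C hC h2, ?_⟩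
  have key : ∀ (C : ∀ n, Set (Op S n)), IsLocalClone C →
      (∀ n, EE (· ≤ · : S → S → Prop) n ⊆ C n) →
      EE (quotOrderOf (thetaOf (sqsubOf C))) = C := by
    intro C hC h2
    rw [quot_theta (congOrder_sqsub hC.1 h2)]
    exact (main_eq hdir C hC h2).symm
  refine ⟨{ toFun := fun C => ⟨thetaOf (sqsubOf C.1), theta_cong (congOrder_sqsub C.2.1.1 C.2.2)⟩,
            invFun := fun θ => ⟨EE (quotOrderOf θ.1),
              EE_isLocalClone (quotOrder_congOrder θ.2),
              C2_le_EE (quotOrder_congOrder θ.2)⟩,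
            left_inv := ?_, right_inv := ?_, map_rel_iff' := ?_ }, fun C => rfl⟩
  · intro C
    exact Subtype.ext (key C.1 C.2.1 C.2.2)
  · intro θ
    apply Subtype.ext
    show thetaOf (sqsubOf (EE (quotOrderOf θ.1))) = θ.1
    rw [sqsub_EE (quotOrder_congOrder θ.2), theta_quot θ.2]
  · intro a b
    simp only [Equiv.coe_fn_mk, Subtype.mk_le_mk]
    constructor
    · intro hle
      rw [← Subtype.coe_le_coe]
      have h1 : ∀ x y : S, thetaOf (sqsubOf a.1) x y → thetaOf (sqsubOf b.1) x y :=
        fun x y h => hle x y h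
      intro n
      rw [← key a.1 a.2.1 a.2.2, ← key b.1 b.2.1 b.2.2]
      exact fun f hf x => h1 _ _ (hf x)
    · intro hle
      have h : ∀ n, a.1 n ⊆ b.1 n := fun n => Subtype.coe_le_coe.mpr hle n
      exact fun x y => theta_sqsub_mono h x y

end Final


/-- For a downward directed semilattice `S` and `𝒞₂ = ℰ(≤)`,
every local clone `𝒞 ⊇ 𝒞₂` satisfies `𝒞 = ℰ(⊑_𝒞)`; consequently the interval
`[𝒞₂, 𝒪_S]` of local clones is order-isomorphic to the congruence lattice of
`(S, ⊔)`, via `𝒞 ↦ θ_{⊑_𝒞}`. -/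
theorem interval_iso_congLattice {S : Type*} [SemilatticeSup S]
    (hdir : DownDirected S) :
    (∀ C : ∀ n, Set (Op S n), IsLocalClone C →
      (∀ n, EE (· ≤ · : S → S → Prop) n ⊆ C n) → C = EE (sqsubOf C)) ∧
    ∃ e : {C : ∀ n, Set (Op S n) //
            IsLocalClone C ∧ ∀ n, EE (· ≤ · : S → S → Prop) n ⊆ C n} ≃o
          {θ : S → S → Prop // IsSemilatticeCong θ},
      ∀ C, (e C : S → S → Prop) = thetaOf (sqsubOf C.1) := by
  exact interval_iso_congLattice' hdir
end

section
/- Let 𝒞₃ be the clone of idempotent operations on X (those f with f(x,…,x) = x for all x). If 𝒟 ⊇ 𝒞₃ is a clone, f, g are unary functions on X with f ∈ 𝒟 and fix(f) ⊆ fix(g), then g ∈ 𝒟. -/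
/-- A filter of subsets of `X` (the improper filter `𝒫(X)` is allowed). -/
def IsSetFilter {X : Type*} (F : Set (Set X)) : Prop :=
  Set.univ ∈ F ∧ (∀ A B : Set X, A ∈ F → A ⊆ B → B ∈ F) ∧
  (∀ A B : Set X, A ∈ F → B ∈ F → A ∩ B ∈ F)

/-- `fix f`: the set of `x` with `f(x,…,x) = x`. -/
def fixSet {X : Type*} {n : ℕ} (f : Op X n) : Set X :=
  {x | f (fun _ => x) = x}

/-- `nix f`: the set of `x` with `f(x,…,x) ≠ x`. -/
def nixSet {X : Type*} {n : ℕ} (f : Op X n) : Set X :=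
  {x | f (fun _ => x) ≠ x}

/-- `𝒞_ℱ`: the operations whose fixed-point set belongs to `ℱ`. -/
def CF {X : Type*} (F : Set (Set X)) : ∀ n, Set (Op X n) :=
  fun _ => {f | fixSet f ∈ F}

/-- `𝒞₃`: the clone of idempotent operations. -/
def C3 (X : Type*) : ∀ n, Set (Op X n) :=
  fun _ => {f | ∀ x : X, f (fun _ => x) = x}

/-- If `𝒟 ⊇ 𝒞₃` is a clone, `f, g` are unary with `f ∈ 𝒟` and
`fix(f) ⊆ fix(g)`, then `g ∈ 𝒟`. -/
theorem unary_fix_mono {X : Type*} (D : ∀ n, Set (Op X n)) (hD : IsClone D)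
    (hD3 : ∀ n, C3 X n ⊆ D n) (f g : Op X 0) (hf : f ∈ D 0)
    (hfix : fixSet f ⊆ fixSet g) : g ∈ D 0 := by
  classical
  set h : Op X 1 := fun v => if v 1 = v 0 then v 0 else g (fun _ => v 0) with hh
  have hhC3 : h ∈ C3 X 1 := by
    intro x
    simp [hh]
  have hproj : (fun x : Fin 1 → X => x 0) ∈ D 0 := hD.1 0 0
  have hcomp := hD.2 1 0 h (fun i => if i = 0 then (fun x => x 0) else f)
    (hD3 1 hhC3) (by
      intro i
      by_cases hi : i = 0 <;> simp [hi, hproj, hf])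
  have heq : (fun x : Fin 1 → X => h (fun i => (if i = 0 then (fun x => x 0) else f) x)) = g := by
    funext x
    have hx : (fun _ : Fin 1 => x 0) = x := by
      funext j; congr 1; exact Subsingleton.elim _ _
    simp only [hh]
    by_cases hc : f x = x 0
    · have : x 0 ∈ fixSet f := by simpa [fixSet, hx] using hc
      have := hfix this
      simp only [fixSet, Set.mem_setOf_eq, hx] at this
      simp [hc, hx, ← this]
    · simp [hc, hx]
  rwa [heq] at hcomp
end

section
/- Let 𝒟 be a clone on an infinite set X with 𝒞₃ ⊆ 𝒟 (where 𝒞₃ is the clone of idempotent operations). Then the family I = { nix(f) : f ∈ 𝒟 unary }, where nix(f) = { x : f(x) ≠ x }, is an ideal of subsets of X: it is downward closed and closed under finite unions. -/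
/-- For a clone `𝒟 ⊇ 𝒞₃` on an infinite set `X`, the family
`I = { nix(f) : f ∈ 𝒟 unary }` is an ideal: downward closed and closed under
(finite) unions. -/
theorem nix_family_isIdeal {X : Type*} [Infinite X]
    (D : ∀ n, Set (Op X n)) (hD : IsClone D) (hD3 : ∀ n, C3 X n ⊆ D n) :
    (∀ A ∈ {A : Set X | ∃ f ∈ D 0, nixSet f = A}, ∀ B : Set X, B ⊆ A →
      B ∈ {A : Set X | ∃ f ∈ D 0, nixSet f = A}) ∧
    (∀ A ∈ {A : Set X | ∃ f ∈ D 0, nixSet f = A},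
     ∀ B ∈ {A : Set X | ∃ f ∈ D 0, nixSet f = A},
      A ∪ B ∈ {A : Set X | ∃ f ∈ D 0, nixSet f = A}) := by
  classical
  obtain ⟨hproj, hcomp⟩ := hD
  constructor
  · rintro A ⟨f, hf, rfl⟩ B hB
    -- binary idempotent op: s v = if v 0 ∈ B then v 1 else v 0
    set s : Op X 1 := fun v => if v 0 ∈ B then v 1 else v 0 with hs
    have hsD : s ∈ D 1 := hD3 1 (fun x => by simp [s])
    set g : Fin 2 → Op X 0 := ![fun v => v 0, f] with hg
    have hgD : ∀ i, g i ∈ D 0 := by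
      intro i
      fin_cases i
      · exact hproj 0 0
      · exact hf
    refine ⟨fun v => s (fun i => g i v), hcomp 1 0 s g hsD hgD, ?_⟩
    ext x
    simp only [nixSet, Set.mem_setOf_eq, s, g]
    by_cases hx : x ∈ B
    · simp only [Matrix.cons_val_zero, Matrix.cons_val_one, Matrix.head_cons, if_pos hx]
      exact ⟨fun _ => hx, fun _ => by simpa [hx, nixSet] using hB hx⟩
    · simp [hx]
  · rintro A ⟨f, hf, rfl⟩ B ⟨g, hg, rfl⟩
    -- ternary idempotent op: t v = if v 1 ≠ v 0 then v 1 else v 2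
    set t : Op X 2 := fun v => if v 1 ≠ v 0 then v 1 else v 2 with ht
    have htD : t ∈ D 2 := hD3 2 (fun x => by simp [t])
    set w : Fin 3 → Op X 0 := ![fun v => v 0, f, g] with hw
    have hwD : ∀ i, w i ∈ D 0 := by
      intro i
      fin_cases i
      · exact hproj 0 0
      · exact hf
      · exact hg
    refine ⟨fun v => t (fun i => w i v), hcomp 2 0 t w htD hwD, ?_⟩
    ext x
    simp only [nixSet, Set.mem_setOf_eq, t, w, Set.mem_union,
      Matrix.cons_val_zero, Matrix.cons_val_one, Matrix.head_cons]
    by_cases hfx : f (fun _ => x) = x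
    · simp [hfx]
    · simp [hfx]
end

section
/- The map ℱ ↦ 𝒞_ℱ = { f : fix(f) ∈ ℱ } is an order isomorphism between the set of all filters on X (including the improper filter 𝒫(X)) ordered by inclusion and the interval [𝒞₃, 𝒪] of all clones above the clone 𝒞₃ of idempotent operations. In particular, the precomplete (maximal) clones above 𝒞₃ are exactly the clones 𝒞_U for U an ultrafilter on X. -/
section Aux
variable {X : Type*}

noncomputable def otherElt [Nontrivial X] (x : X) : X := Classical.choose (exists_ne x)

lemma otherElt_ne [Nontrivial X] (x : X) : otherElt x ≠ x := Classical.choose_spec (exists_ne x)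

noncomputable def opA [Nontrivial X] (A : Set X) : Op X 0 :=
  fun v => @ite _ (v 0 ∈ A) (Classical.propDecidable _) (v 0) (otherElt (v 0))

lemma fixSet_opA [Nontrivial X] (A : Set X) : fixSet (opA A) = A := by
  ext x
  simp only [fixSet, opA, Set.mem_setOf_eq]
  split_ifs with h
  · simp [h]
  · simp [otherElt_ne x, h]

/-- Key absorption lemma. -/
lemma mem_of_fix_subset {C : ∀ n, Set (Op X n)} (hC : IsClone C)
    (h3 : ∀ n, C3 X n ⊆ C n) {m n : ℕ} {g : Op X m} {f : Op X n}
    (hg : g ∈ C m) (hsub : fixSet g ⊆ fixSet f) : f ∈ C n := by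
  classical
  set H : Op X (n + 1) := fun v =>
    if (∀ i : Fin (n + 1), v i.castSucc = v (Fin.last (n + 1))) ∧
        f (fun _ => v (Fin.last (n + 1))) ≠ v (Fin.last (n + 1))
    then v (Fin.last (n + 1)) else f (fun i => v i.castSucc) with hHdef
  have hH3 : H ∈ C3 X (n + 1) := by
    intro x
    by_cases hfx : f (fun _ => x) = x <;> simp [hHdef, hfx]
  set G : Fin (n + 2) → Op X n :=
    Fin.lastCases (fun v => g (fun _ => v 0)) (fun i => fun v => v i) with hGdef
  have hGl : G (Fin.last (n + 1)) = fun v => g (fun _ => v 0) := by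
    simp [hGdef]
  have hGc : ∀ i : Fin (n + 1), G i.castSucc = fun v => v i := by
    intro i; simp [hGdef]
  have hGmem : ∀ j, G j ∈ C n := by
    intro j
    induction j using Fin.lastCases with
    | last =>
        rw [hGl]
        exact hC.2 m n g (fun _ => fun v => v 0) hg (fun _ => hC.1 n 0)
    | cast i => rw [hGc]; exact hC.1 n i
  have hcomp := hC.2 (n + 1) n H G (h3 _ hH3) hGmem
  have heq : (fun v => H (fun j => G j v)) = f := by
    funext v
    have hl : G (Fin.last (n + 1)) v = g (fun _ => v 0) := by rw [hGl]
    have hc : ∀ i : Fin (n + 1), G i.castSucc v = v i := by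
      intro i; rw [hGc i]
    show H (fun j => G j v) = f v
    rw [hHdef]
    simp only [hl, hc]
    rw [if_neg]
    rintro ⟨hall, hne⟩
    have h0 : v 0 = g (fun _ => v 0) := hall 0
    have : g (fun _ => v 0) ∈ fixSet g := by
      simp only [fixSet, Set.mem_setOf_eq]
      conv_lhs => rw [← h0]
    exact hne (hsub this)
  rwa [heq] at hcomp

end Aux

section Main
variable {X : Type*}

lemma filter_forall_mem {F : Set (Set X)} (hF : IsSetFilter F) :
    ∀ (k : ℕ) (s : Fin k → Set X), (∀ i, s i ∈ F) → {x | ∀ i, x ∈ s i} ∈ F := by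
  intro k
  induction k with
  | zero =>
      intro s _
      exact hF.2.1 _ _ hF.1 (fun x _ i => i.elim0)
  | succ k ih =>
      intro s h
      have h2 := hF.2.2 _ _ (h 0) (ih (fun i => s i.succ) (fun i => h i.succ))
      refine hF.2.1 _ _ h2 ?_
      rintro x ⟨h0, hs⟩ i
      induction i using Fin.cases with
      | zero => exact h0
      | succ j => exact hs j

lemma CF_clone {F : Set (Set X)} (hF : IsSetFilter F) :
    IsClone (CF F) ∧ ∀ n, C3 X n ⊆ CF F n := by
  constructor
  · constructor
    · intro n i
      have : fixSet (fun x : Fin (n+1) → X => x i) = Set.univ := by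
        ext x; simp [fixSet]
      simp only [CF, Set.mem_setOf_eq, this]
      exact hF.1
    · intro m n f g hf hg
      have hmem : (fixSet f ∩ {x | ∀ i, x ∈ fixSet (g i)}) ∈ F :=
        hF.2.2 _ _ hf (filter_forall_mem hF _ _ hg)
      refine hF.2.1 _ _ hmem ?_
      rintro x ⟨hxf, hxg⟩
      simp only [fixSet, Set.mem_setOf_eq] at *
      have : (fun i => g i (fun _ => x)) = fun _ : Fin (m+1) => x := by
        funext i; exact hxg i
      rw [this]; exact hxf
  · intro n f hf
    have : fixSet f = Set.univ := by
      ext x; simpa [fixSet] using hf x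
    simp only [CF, Set.mem_setOf_eq, this]
    exact hF.1

/-- The filter associated to a clone. -/
def FC (C : ∀ n, Set (Op X n)) : Set (Set X) := {A | ∃ n, ∃ f ∈ C n, fixSet f = A}

lemma FC_filter [Nontrivial X] {C : ∀ n, Set (Op X n)} (hC : IsClone C)
    (h3 : ∀ n, C3 X n ⊆ C n) : IsSetFilter (FC C) := by
  refine ⟨⟨0, fun v => v 0, hC.1 0 0, by ext x; simp [fixSet]⟩, ?_, ?_⟩
  · rintro A B ⟨m, g, hg, rfl⟩ hAB
    refine ⟨0, opA B, ?_, fixSet_opA B⟩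
    exact mem_of_fix_subset hC h3 hg (by rw [fixSet_opA]; exact hAB)
  · rintro A B ⟨m, f, hf, rfl⟩ ⟨k, g, hg, rfl⟩
    classical
    set q : Op X 2 := fun v =>
      @ite _ (v 1 = v 0 ∧ v 2 = v 0) (Classical.propDecidable _) (v 0) (otherElt (v 0)) with hq
    have hq3 : q ∈ C3 X 2 := by intro x; simp [hq]
    set ft : Op X 0 := fun v => f (fun _ => v 0) with hft
    set gt : Op X 0 := fun v => g (fun _ => v 0) with hgt
    have hftC : ft ∈ C 0 := hC.2 m 0 f (fun _ => fun v => v 0) hf (fun _ => hC.1 0 0)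
    have hgtC : gt ∈ C 0 := hC.2 k 0 g (fun _ => fun v => v 0) hg (fun _ => hC.1 0 0)
    set G : Fin 3 → Op X 0 := ![fun v => v 0, ft, gt] with hG
    have hGmem : ∀ j, G j ∈ C 0 := by
      intro j
      fin_cases j
      · exact hC.1 0 0
      · exact hftC
      · exact hgtC
    have hcomp := hC.2 2 0 q G (h3 _ hq3) hGmem
    refine ⟨0, _, hcomp, ?_⟩
    ext x
    simp only [fixSet, Set.mem_setOf_eq, Set.mem_inter_iff]
    have e0 : G 0 (fun _ => x) = x := rfl
    have e1 : G 1 (fun _ => x) = f (fun _ => x) := rfl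
    have e2 : G 2 (fun _ => x) = g (fun _ => x) := rfl
    show q (fun i => G i (fun _ => x)) = x ↔ _
    rw [hq]
    simp only [e0, e1, e2]
    show (if f (fun _ => x) = x ∧ g (fun _ => x) = x then x else otherElt x) = x ↔ _
    split_ifs with h
    · simp [h.1, h.2]
    · simp only [otherElt_ne x, false_iff]
      intro hcon
      exact h ⟨hcon.1, hcon.2⟩

lemma CF_FC {C : ∀ n, Set (Op X n)} (hC : IsClone C)
    (h3 : ∀ n, C3 X n ⊆ C n) : CF (FC C) = C := by
  funext n
  ext f
  constructor
  · rintro hf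
    obtain ⟨m, g, hg, hfix⟩ := hf
    exact mem_of_fix_subset hC h3 hg (by rw [hfix])
  · intro hf
    exact ⟨n, f, hf, rfl⟩

lemma FC_CF [Nontrivial X] {F : Set (Set X)} (hF : IsSetFilter F) : FC (CF F) = F := by
  ext A
  constructor
  · rintro ⟨n, f, hf, rfl⟩
    exact hf
  · intro hA
    exact ⟨0, opA A, by simp only [CF, Set.mem_setOf_eq, fixSet_opA]; exact hA, fixSet_opA A⟩

end Main


/-- On an infinite set `X`, `ℱ ↦ 𝒞_ℱ` is an order isomorphism
between the filters on `X` (including the improper one), ordered by inclusion,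
and the clones above `𝒞₃`; the precomplete clones above `𝒞₃` are exactly the
`𝒞_U` for ultrafilters `U`. -/
theorem filters_iso_clones_above_C3 {X : Type*} [Infinite X] :
    (∃ e : {F : Set (Set X) // IsSetFilter F} ≃o
           {C : ∀ n, Set (Op X n) // IsClone C ∧ ∀ n, C3 X n ⊆ C n},
      ∀ F, (e F : ∀ n, Set (Op X n)) = CF F.1) ∧
    (∀ C : ∀ n, Set (Op X n), IsClone C → (∀ n, C3 X n ⊆ C n) →
      ((C ≠ (fun n => (Set.univ : Set (Op X n))) ∧
        ∀ D : ∀ n, Set (Op X n), IsClone D → (∀ n, C n ⊆ D n) → C ≠ D →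
          D = (fun n => (Set.univ : Set (Op X n)))) ↔
       ∃ U : Set (Set X), IsSetFilter U ∧ ∅ ∉ U ∧
         (∀ A : Set X, A ∈ U ∨ Aᶜ ∈ U) ∧ C = CF U)) := by
  constructor
  · refine ⟨⟨⟨fun F => ⟨CF F.1, CF_clone F.2⟩,
      fun C => ⟨FC C.1, FC_filter C.2.1 C.2.2⟩,
      fun F => Subtype.ext (FC_CF F.2),
      fun C => Subtype.ext (CF_FC C.2.1 C.2.2)⟩, ?_⟩, fun F => rfl⟩
    intro F G
    constructor
    · intro h A hA
      have h0 : opA A ∈ CF F.1 0 := by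
        simp only [CF, Set.mem_setOf_eq, fixSet_opA]; exact hA
      have h1 : fixSet (opA A) ∈ G.1 := h 0 h0
      rwa [fixSet_opA] at h1
    · intro h n f hf
      exact h hf
  · intro C hC h3
    constructor
    · rintro ⟨hne, hmax⟩
      set F := FC C with hF
      have hFfil : IsSetFilter F := FC_filter hC h3
      have hCF : C = CF F := (CF_FC hC h3).symm
      have hempty : ∅ ∉ F := by
        intro h0
        apply hne
        funext n
        ext f
        simp only [Set.mem_univ, iff_true]
        rw [hCF]
        exact hFfil.2.1 _ _ h0 (Set.empty_subset _)
      refine ⟨F, hFfil, hempty, ?_, hCF⟩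
      intro A
      by_contra hcon
      push_neg at hcon
      obtain ⟨hA1, hA2⟩ := hcon
      set G : Set (Set X) := {B | ∃ A' ∈ F, A' ∩ A ⊆ B} with hGdef
      have hGfil : IsSetFilter G := by
        refine ⟨⟨Set.univ, hFfil.1, Set.subset_univ _⟩, ?_, ?_⟩
        · rintro B1 B2 ⟨A', hA', hsub⟩ hB
          exact ⟨A', hA', hsub.trans hB⟩
        · rintro B1 B2 ⟨A1', hA1', hs1⟩ ⟨A2', hA2', hs2⟩
          refine ⟨A1' ∩ A2', hFfil.2.2 _ _ hA1' hA2', ?_⟩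
          intro x hx
          exact ⟨hs1 ⟨hx.1.1, hx.2⟩, hs2 ⟨hx.1.2, hx.2⟩⟩
      have hFG : ∀ B ∈ F, B ∈ G := fun B hB => ⟨B, hB, Set.inter_subset_left⟩
      have hAG : A ∈ G := ⟨Set.univ, hFfil.1, by simp⟩
      have hsub : ∀ n, C n ⊆ CF G n := by
        intro n f hf
        rw [hCF] at hf
        exact hFG _ hf
      have hneq : C ≠ CF G := by
        intro he
        have : opA A ∈ CF G 0 := by
          simp only [CF, Set.mem_setOf_eq, fixSet_opA]; exact hAG
        rw [← he, hCF] at this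
        simp only [CF, Set.mem_setOf_eq, fixSet_opA] at this
        exact hA1 this
      have hGO := hmax (CF G) (CF_clone hGfil).1 hsub hneq
      have h0G : ∅ ∈ G := by
        have : opA (∅ : Set X) ∈ CF G 0 := by rw [hGO]; trivial
        simpa only [CF, Set.mem_setOf_eq, fixSet_opA] using this
      obtain ⟨A', hA', hsub'⟩ := h0G
      apply hA2
      refine hFfil.2.1 _ _ hA' ?_
      intro x hx
      intro hxA
      exact hsub' ⟨hx, hxA⟩
    · rintro ⟨U, hU, hUe, hUult, rfl⟩
      constructor
      · intro he
        have : opA (∅ : Set X) ∈ CF U 0 := by rw [he]; trivial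
        simp only [CF, Set.mem_setOf_eq, fixSet_opA] at this
        exact hUe this
      · intro D hD hCD hne
        have hD3 : ∀ n, C3 X n ⊆ D n := fun n hf => fun h => hCD n ((CF_clone hU).2 n h)
        have hDF : D = CF (FC D) := (CF_FC hD hD3).symm
        obtain ⟨n, f, hfD, hfC⟩ : ∃ n, ∃ f ∈ D n, f ∉ CF U n := by
          by_contra hcon
          push_neg at hcon
          apply hne
          funext n
          ext f
          exact ⟨fun h => hCD n h, fun h => hcon n f h⟩
        have hfixU : fixSet f ∉ U := hfC
        have hcompl : (fixSet f)ᶜ ∈ U := (hUult (fixSet f)).resolve_left hfixU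
        have hUFC : ∀ A ∈ U, A ∈ FC D := by
          intro A hA
          refine ⟨0, opA A, ?_, fixSet_opA A⟩
          apply hCD 0
          simp only [CF, Set.mem_setOf_eq, fixSet_opA]
          exact hA
        have hFCfil : IsSetFilter (FC D) := FC_filter hD hD3
        have h1 : fixSet f ∈ FC D := ⟨n, f, hfD, rfl⟩
        have h2 : (fixSet f)ᶜ ∈ FC D := hUFC _ hcompl
        have h0 : (∅ : Set X) ∈ FC D := by
          have := hFCfil.2.2 _ _ h1 h2
          simpa using this
        funext k
        ext g
        simp only [Set.mem_univ, iff_true]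
        rw [hDF]
        exact hFCfil.2.1 _ _ h0 (Set.empty_subset _)
end
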